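/- arXiv:2112.13763 — 5 statements merged into one kernel-verified Lean document; each statement's English description precedes it below -/
import Mathlib

section
/- Let A₁,…,A_k be n×n positive definite complex matrices, X₁,…,X_k be n×m complex matrices, and t₁,…,t_k be nonnegative reals with ∑ⱼ tⱼ = 1. Then (∑ⱼ tⱼ Xⱼ)* (∑ⱼ tⱼ Aⱼ)⁻¹ (∑ⱼ tⱼ Xⱼ) ≤ ∑ⱼ tⱼ Xⱼ* Aⱼ⁻¹ Xⱼ in the Loewner order; i.e., the map (X, A) ↦ X* A⁻¹ X is jointly convex in (X, A) for A positive definite. -/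
/-!
The block matrix `[[A, X], [Xᴴ, Xᴴ A⁻¹ X]]` is positive semidefinite for `A` positive definite,
its Schur complement being zero. Positive semidefinite matrices form a convex cone and block
matrices combine blockwise, so the convex combination
`[[∑ tⱼ Aⱼ, ∑ tⱼ Xⱼ], [(∑ tⱼ Xⱼ)ᴴ, ∑ tⱼ Xⱼᴴ Aⱼ⁻¹ Xⱼ]]` is positive semidefinite as well; since
`∑ tⱼ Aⱼ` is positive definite, the Schur complement of this matrix, which is the difference in
the theorem, is positive semidefinite.
-/

open Matrix
open scoped ComplexOrder

namespace Matrix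

variable {𝕜 ι l m n o : Type*} [RCLike 𝕜]

theorem fromBlocks_sum {α : Type*} [AddCommMonoid α] (s : Finset ι)
    (A : ι → Matrix n l α) (B : ι → Matrix n m α) (C : ι → Matrix o l α)
    (D : ι → Matrix o m α) :
    ∑ i ∈ s, fromBlocks (A i) (B i) (C i) (D i) =
      fromBlocks (∑ i ∈ s, A i) (∑ i ∈ s, B i) (∑ i ∈ s, C i) (∑ i ∈ s, D i) := by
  induction s using Finset.cons_induction with
  | empty => simp
  | cons i s hi ih => simp [Finset.sum_cons, ih, fromBlocks_add]

theorem PosDef.posSemidef_fromBlocks_conjTranspose_inv_mul [Fintype m] [DecidableEq m]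
    [Fintype n] {A : Matrix m m 𝕜} (hA : A.PosDef)
    (B : Matrix m n 𝕜) : (fromBlocks A B Bᴴ (Bᴴ * A⁻¹ * B)).PosSemidef := by
  have := hA.isUnit.invertible
  rw [PosDef.fromBlocks₁₁ _ _ hA, sub_self]
  exact PosSemidef.zero

theorem posDef_sum_smul [Fintype m] {s : Finset ι} {A : ι → Matrix m m 𝕜} {t : ι → ℝ}
    (hA : ∀ i ∈ s, (A i).PosDef) (ht : ∀ i ∈ s, 0 ≤ t i) (hpos : ∃ i ∈ s, 0 < t i) :
    (∑ i ∈ s, t i • A i).PosDef := by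
  classical
  obtain ⟨i, hi, hti⟩ := hpos
  rw [← Finset.add_sum_erase _ _ hi]
  refine ((hA i hi).smul hti).add_posSemidef (posSemidef_sum _ fun j hj => ?_)
  have hj := Finset.mem_of_mem_erase hj
  exact (hA j hj).posSemidef.smul (ht j hj)

theorem conjTranspose_sum_smul (s : Finset ι) (t : ι → ℝ) (X : ι → Matrix m n 𝕜) :
    (∑ i ∈ s, t i • X i)ᴴ = ∑ i ∈ s, t i • (X i)ᴴ := by
  simp [conjTranspose_sum, conjTranspose_smul]

theorem posSemidef_sum_smul_conjTranspose_inv_mul_sub [Fintype m] [DecidableEq m]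
    [Fintype n] [DecidableEq n] {s : Finset ι} {A : ι → Matrix m m 𝕜}
    (X : ι → Matrix m n 𝕜) {t : ι → ℝ} (hA : ∀ i ∈ s, (A i).PosDef)
    (ht : ∀ i ∈ s, 0 ≤ t i) (hpos : ∃ i ∈ s, 0 < t i) :
    ((∑ i ∈ s, t i • ((X i)ᴴ * (A i)⁻¹ * X i)) -
      (∑ i ∈ s, t i • X i)ᴴ * (∑ i ∈ s, t i • A i)⁻¹ * (∑ i ∈ s, t i • X i)).PosSemidef := by
  have hblocks :
      (∑ i ∈ s, t i • fromBlocks (A i) (X i) (X i)ᴴ ((X i)ᴴ * (A i)⁻¹ * X i)).PosSemidef :=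
    posSemidef_sum _ fun i hi =>
      ((hA i hi).posSemidef_fromBlocks_conjTranspose_inv_mul (X i)).smul (ht i hi)
  have hsumA := posDef_sum_smul hA ht hpos
  have := hsumA.isUnit.invertible
  simp_rw [fromBlocks_smul] at hblocks
  rwa [fromBlocks_sum, ← conjTranspose_sum_smul, PosDef.fromBlocks₁₁ _ _ hsumA] at hblocks

end Matrix

/-- **Joint convexity of `(X, A) ↦ X* A⁻¹ X`** (Kiefer; Lieb–Ruskai).
For positive definite `n × n` matrices `A j`, matrices `X j : n × m`, and convex weights
`t j`, the matrix `∑ t j • (X j)* (A j)⁻¹ (X j) − (∑ t j • X j)* (∑ t j • A j)⁻¹ (∑ t j • X j)`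
is positive semidefinite, i.e. the Loewner inequality
`(∑ t j • X j)* (∑ t j • A j)⁻¹ (∑ t j • X j) ≤ ∑ t j • (X j)* (A j)⁻¹ (X j)` holds. -/
theorem joint_convexity_congruence_inverse
    {n m k : ℕ} (A : Fin k → Matrix (Fin n) (Fin n) ℂ)
    (X : Fin k → Matrix (Fin n) (Fin m) ℂ) (t : Fin k → ℝ)
    (hA : ∀ j, (A j).PosDef) (ht : ∀ j, 0 ≤ t j) (hsum : ∑ j, t j = 1) :
    ((∑ j, t j • ((X j)ᴴ * (A j)⁻¹ * X j)) -
      (∑ j, t j • X j)ᴴ * (∑ j, t j • A j)⁻¹ * (∑ j, t j • X j)).PosSemidef := by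
  have hpos : ∃ j ∈ Finset.univ, 0 < t j :=
    Finset.exists_lt_of_sum_lt (f := fun _ => 0) (by simp [hsum])
  exact posSemidef_sum_smul_conjTranspose_inv_mul_sub X (fun j _ => hA j) (fun j _ => ht j) hpos
end

section
/- Let g : (0,∞) → ℝ be operator convex with g(1) = 0. Then the map (A, B) ↦ (I ⊗ B) g(A ⊗ B⁻¹), defined for positive definite m×m matrices A and positive definite n×n matrices B, is jointly convex in the Loewner order: for positive definite A₁, A₂, B₁, B₂ and t ∈ [0,1], with A = tA₁+(1−t)A₂ and B = tB₁+(1−t)B₂, one has (I ⊗ B) g(A ⊗ B⁻¹) ≤ t (I ⊗ B₁) g(A₁ ⊗ B₁⁻¹) + (1−t) (I ⊗ B₂) g(A₂ ⊗ B₂⁻¹). (Note that I ⊗ B commutes with A ⊗ B⁻¹, so the product is Hermitian.) -/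
open Matrix
open scoped Kronecker ComplexOrder

/-- `matFun f A` is `f(A)` for a Hermitian matrix `A`, defined via the spectral
decomposition `A = U diag(λ) U*` as `U diag(f(λ)) U*` (and junk value `0` otherwise). -/
noncomputable def matFun {n : Type*} [Fintype n] [DecidableEq n]
    (f : ℝ → ℝ) (A : Matrix n n ℂ) : Matrix n n ℂ :=
  if hA : A.IsHermitian then
    (hA.eigenvectorUnitary : Matrix n n ℂ) *
      Matrix.diagonal (fun i => (f (hA.eigenvalues i) : ℂ)) *
      star (hA.eigenvectorUnitary : Matrix n n ℂ)
  else 0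

/-- A function `g : (0, ∞) → ℝ` (modelled as `g : ℝ → ℝ`, only its values on `(0, ∞)`
matter) is operator convex if for every size `n`, all positive definite `n × n` complex
matrices `A, B` and all `t ∈ [0, 1]`,
`g(t A + (1 − t) B) ≤ t g(A) + (1 − t) g(B)` in the Loewner order. -/
def OperatorConvex (g : ℝ → ℝ) : Prop :=
  ∀ (n : ℕ) (A B : Matrix (Fin n) (Fin n) ℂ), A.PosDef → B.PosDef →
    ∀ t : ℝ, 0 ≤ t → t ≤ 1 →
      (t • matFun g A + (1 - t) • matFun g B - matFun g (t • A + (1 - t) • B)).PosSemidef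

/-!
With `X = A ⊗ I` and `T = I ⊗ B` commuting, `(I ⊗ B) g(A ⊗ B⁻¹) = T g(X T⁻¹)` is the operator
perspective `T^{1/2} g(T^{-1/2} X T^{-1/2}) T^{1/2}` of `g`, so the theorem is the joint convexity
of the perspective (Effros). The perspective is positively homogeneous, so it suffices to show
that it is subadditive; this is the Hansen–Pedersen–Jensen inequality
`g(V₁* X₁ V₁ + V₂* X₂ V₂) ≤ V₁* g(X₁) V₁ + V₂* g(X₂) V₂` (for `V₁* V₁ + V₂* V₂ = I`) applied with
`Vᵢ = Tᵢ^{1/2} T^{-1/2}` and conjugated by `T^{1/2}`. That inequality follows from operator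
convexity at `t = 1/2`: complete the column `(V₁, V₂)` to a unitary `W`, and compare `g` of
`Y = W* diag(X₁, X₂) W` and of `J Y J`, `J = diag(I, -I)`, with `g` of their average, which is
the block diagonal part of `Y`.
-/

open scoped MatrixOrder

theorem exists_polynomial_eqOn_of_finite {F : Type*} [Field F] (f : F → F) {s : Set F}
    (hs : s.Finite) : ∃ q : Polynomial F, s.EqOn (fun x => q.eval x) f := by
  classical
  refine ⟨Lagrange.interpolate hs.toFinset id f, fun x hx => ?_⟩
  simpa using Lagrange.eval_interpolate_at_node f (Set.injOn_id _) (hs.mem_toFinset.mpr hx)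

namespace Matrix

theorem toBlocks₁₁_mono {ι κ : Type*} {M N : Matrix (ι ⊕ κ) (ι ⊕ κ) ℂ} (h : M ≤ N) :
    M.toBlocks₁₁ ≤ N.toBlocks₁₁ := by
  rw [le_iff] at h ⊢
  exact h.submatrix Sum.inl

theorem toBlocks₁₁_star_mul_fromBlocks_mul {ι κ : Type*} [Fintype ι] [Fintype κ]
    {V₁ : Matrix ι ι ℂ} {V₂ : Matrix κ ι ℂ}
    (B : Matrix ι κ ℂ) (D : Matrix κ κ ℂ) (P : Matrix ι ι ℂ) (Q : Matrix κ κ ℂ) :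
    (star (fromBlocks V₁ B V₂ D) * fromBlocks P 0 0 Q * fromBlocks V₁ B V₂ D).toBlocks₁₁
      = V₁ᴴ * P * V₁ + V₂ᴴ * Q * V₂ := by
  simp [star_eq_conjTranspose, fromBlocks_conjTranspose, fromBlocks_multiply, Matrix.mul_assoc]

theorem PosDef.convex_comb {ι : Type*} {A B : Matrix ι ι ℂ} (hA : A.PosDef) (hB : B.PosDef) {t : ℝ}
    (ht₀ : 0 ≤ t) (ht₁ : t ≤ 1) : (t • A + (1 - t) • B).PosDef := by
  rcases ht₀.eq_or_lt with rfl | ht₀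
  · simpa using hB
  exact (hA.smul ht₀).add_posSemidef (hB.posSemidef.smul (sub_nonneg.mpr ht₁))

variable {ι κ : Type*} [Fintype ι] [DecidableEq ι] [Fintype κ] [DecidableEq κ]

theorem IsHermitian.matFun_eq_cfc {A : Matrix ι ι ℂ} (hA : A.IsHermitian) (f : ℝ → ℝ) :
    matFun f A = cfc f A := by
  rw [hA.cfc_eq, IsHermitian.cfc, Unitary.conjStarAlgAut_apply, matFun, dif_pos hA]
  rfl

theorem IsHermitian.cfc_eq_aeval {A : Matrix ι ι ℂ} (hA : A.IsHermitian) {f : ℝ → ℝ}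
    {q : Polynomial ℝ} (hq : (spectrum ℝ A).EqOn (fun x => q.eval x) f) :
    cfc f A = Polynomial.aeval A q := by
  rw [← cfc_congr hq, cfc_polynomial q A hA.isSelfAdjoint]

theorem cfc_map_algHom {F : Type*} [FunLike F (Matrix ι ι ℂ) (Matrix κ κ ℂ)]
    [AlgHomClass F ℝ (Matrix ι ι ℂ) (Matrix κ κ ℂ)] (φ : F) (f : ℝ → ℝ) {A : Matrix ι ι ℂ}
    (hA : A.IsHermitian) (hφA : (φ A).IsHermitian) : cfc f (φ A) = φ (cfc f A) := by
  obtain ⟨q, hq⟩ := exists_polynomial_eqOn_of_finite f (finite_real_spectrum (A := A))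
  rw [hA.cfc_eq_aeval hq, hφA.cfc_eq_aeval (hq.mono (AlgHom.spectrum_apply_subset φ A)),
    Polynomial.aeval_algHom_apply]

theorem cfc_unitary_conj (f : ℝ → ℝ) {U A : Matrix ι ι ℂ} (hU : U ∈ unitary (Matrix ι ι ℂ))
    (hA : A.IsHermitian) : cfc f (U * A * star U) = U * cfc f A * star U := by
  have hUAU : (U * A * star U).IsHermitian := hA.isSelfAdjoint.conjugate U
  simpa using cfc_map_algHom (Unitary.conjStarAlgAut ℝ _ ⟨U, hU⟩) f hA (by simpa using hUAU)

theorem aeval_fromBlocks_zero (q : Polynomial ℝ) (P : Matrix ι ι ℂ) (Q : Matrix κ κ ℂ) :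
    Polynomial.aeval (fromBlocks P 0 0 Q) q
      = fromBlocks (Polynomial.aeval P q) 0 0 (Polynomial.aeval Q q) := by
  induction q using Polynomial.induction_on' with
  | add p r hp hr => simp [hp, hr, fromBlocks_add]
  | monomial n a =>
    simp [Polynomial.aeval_monomial, ← Algebra.smul_def, fromBlocks_diagonal_pow, fromBlocks_smul]

theorem cfc_fromBlocks_zero (f : ℝ → ℝ) {P : Matrix ι ι ℂ} {Q : Matrix κ κ ℂ}
    (hP : P.IsHermitian) (hQ : Q.IsHermitian) :
    cfc f (fromBlocks P 0 0 Q) = fromBlocks (cfc f P) 0 0 (cfc f Q) := by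
  have hPQ : (fromBlocks P 0 0 Q).IsHermitian := hP.fromBlocks (by simp) hQ
  obtain ⟨q, hq⟩ := exists_polynomial_eqOn_of_finite f
    ((finite_real_spectrum (A := P)).union (finite_real_spectrum (A := Q)) |>.union
      (finite_real_spectrum (A := fromBlocks P 0 0 Q)))
  rw [hPQ.cfc_eq_aeval (hq.mono Set.subset_union_right),
    hP.cfc_eq_aeval (hq.mono (Set.subset_union_left.trans Set.subset_union_left)),
    hQ.cfc_eq_aeval (hq.mono (Set.subset_union_right.trans Set.subset_union_left)),
    aeval_fromBlocks_zero]

theorem PosDef.fromBlocks_zero {P : Matrix ι ι ℂ} {Q : Matrix κ κ ℂ} (hP : P.PosDef)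
    (hQ : Q.PosDef) : (fromBlocks P 0 0 Q).PosDef := by
  have := hP.isUnit.invertible
  have hPQ : (fromBlocks P 0 0ᴴ Q).PosSemidef :=
    (PosDef.fromBlocks₁₁ 0 Q hP).mpr (by simpa using hQ.posSemidef)
  rw [conjTranspose_zero] at hPQ
  refine hPQ.posDef_iff_isUnit.mpr ?_
  rw [isUnit_iff_isUnit_det, det_fromBlocks_zero₂₁]
  exact (hP.isUnit.map detMonoidHom).mul (hQ.isUnit.map detMonoidHom)

theorem conjTranspose_sqrt (T : Matrix ι ι ℂ) : (CFC.sqrt T)ᴴ = CFC.sqrt T :=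
  (CFC.sqrt_nonneg T).isSelfAdjoint

theorem PosDef.isUnit_det_sqrt {T : Matrix ι ι ℂ} (hT : T.PosDef) : IsUnit (CFC.sqrt T).det :=
  (isUnit_iff_isUnit_det _).mp ((CFC.isUnit_sqrt_iff T hT.posSemidef.nonneg).mpr hT.isUnit)

theorem PosDef.sqrt_inv_mul_mul_sqrt_inv {T X : Matrix ι ι ℂ} (hT : T.PosDef)
    (hX : X.PosDef) : ((CFC.sqrt T)⁻¹ * X * (CFC.sqrt T)⁻¹).PosDef := by
  have hU : IsUnit (CFC.sqrt T)⁻¹ :=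
    (isUnit_iff_isUnit_det _).mpr (isUnit_nonsing_inv_det _ hT.isUnit_det_sqrt)
  simpa [star_eq_conjTranspose, conjTranspose_nonsing_inv, conjTranspose_sqrt] using
    (IsUnit.posDef_star_left_conjugate_iff hU).mpr hX

theorem PosDef.exists_conjTranspose_mul_mul_eq_one {G : Matrix κ κ ℂ} (hG : G.PosDef) :
    ∃ D : Matrix κ κ ℂ, Dᴴ * G * D = 1 := by
  set s := CFC.sqrt G
  have hss : s * s = G := CFC.sqrt_mul_sqrt_self G hG.posSemidef.nonneg
  have hs : IsUnit s.det := hG.isUnit_det_sqrt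
  have hsH : sᴴ = s := conjTranspose_sqrt G
  refine ⟨s⁻¹, ?_⟩
  rw [conjTranspose_nonsing_inv, hsH, ← hss, ← mul_assoc, nonsing_inv_mul _ hs,
    one_mul, mul_nonsing_inv _ hs]

theorem exists_fromBlocks_mem_unitary {V₁ : Matrix ι ι ℂ} {V₂ : Matrix κ ι ℂ} (hV₁ : IsUnit V₁)
    (hV : V₁ᴴ * V₁ + V₂ᴴ * V₂ = 1) :
    ∃ (B : Matrix ι κ ℂ) (D : Matrix κ κ ℂ),
      fromBlocks V₁ B V₂ D ∈ unitary (Matrix (ι ⊕ κ) (ι ⊕ κ) ℂ) := by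
  obtain ⟨K, rfl⟩ : ∃ K, V₂ = K * V₁ := ⟨V₂ * V₁⁻¹, by
    rw [Matrix.mul_assoc, nonsing_inv_mul _ ((isUnit_iff_isUnit_det _).mp hV₁), Matrix.mul_one]⟩
  -- the column `(-K* D, D)` is orthogonal to `(V₁, K V₁)`, and it is a unit vector iff
  -- `D* (1 + K K*) D = 1`
  obtain ⟨D, hD⟩ := (PosDef.one.add_posSemidef
    (posSemidef_self_mul_conjTranspose K)).exists_conjTranspose_mul_mul_eq_one
  refine ⟨-(Kᴴ * D), D, ?_⟩
  rw [mem_unitaryGroup_iff', star_eq_conjTranspose, fromBlocks_conjTranspose, fromBlocks_multiply,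
    hV, ← fromBlocks_one]
  congr 1
  · simp [Matrix.mul_assoc]
  · simp [Matrix.mul_assoc]
  · simpa [Matrix.mul_add, Matrix.add_mul, Matrix.mul_assoc, add_comm] using hD

end Matrix

open Matrix

section OperatorConvex

variable {ι κ : Type*} [Fintype ι] [DecidableEq ι] [Fintype κ] [DecidableEq κ]
  {g : ℝ → ℝ}

theorem OperatorConvex.cfc_le (hg : OperatorConvex g) {A B : Matrix ι ι ℂ}
    (hA : A.PosDef) (hB : B.PosDef) {t : ℝ} (ht₀ : 0 ≤ t) (ht₁ : t ≤ 1) :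
    cfc g (t • A + (1 - t) • B) ≤ t • cfc g A + (1 - t) • cfc g B := by
  let e := reindexAlgEquiv ℝ ℂ (Fintype.equivFin ι)
  have he {M : Matrix ι ι ℂ} (hM : M.IsHermitian) : (e M).IsHermitian := hM.submatrix _
  have hAB := (hA.convex_comb hB ht₀ ht₁).1
  have key := hg _ (e A) (e B) (hA.submatrix (Fintype.equivFin ι).symm.injective)
    (hB.submatrix (Fintype.equivFin ι).symm.injective) t ht₀ ht₁
  rw [← map_smul e, ← map_smul e, ← map_add,
    (he hA.1).matFun_eq_cfc, (he hB.1).matFun_eq_cfc, (he hAB).matFun_eq_cfc,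
    cfc_map_algHom e g hA.1 (he hA.1), cfc_map_algHom e g hB.1 (he hB.1),
    cfc_map_algHom e g hAB (he hAB), ← map_smul e, ← map_smul e, ← map_add, ← map_sub] at key
  exact le_iff.mpr ((posSemidef_submatrix_equiv _).mp key)

theorem OperatorConvex.cfc_toBlocks₁₁_le (hg : OperatorConvex g)
    {Y : Matrix (ι ⊕ κ) (ι ⊕ κ) ℂ} (hY : Y.PosDef) :
    cfc g Y.toBlocks₁₁ ≤ (cfc g Y).toBlocks₁₁ := by
  set J : Matrix (ι ⊕ κ) (ι ⊕ κ) ℂ := fromBlocks 1 0 0 (-1)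
  have hJ : J ∈ unitary (Matrix (ι ⊕ κ) (ι ⊕ κ) ℂ) := by
    simp [J, Unitary.mem_iff, star_eq_conjTranspose, fromBlocks_conjTranspose, fromBlocks_multiply]
  have hpinch (M : Matrix (ι ⊕ κ) (ι ⊕ κ) ℂ) :
      (1 / 2 : ℝ) • M + (1 - 1 / 2 : ℝ) • (J * M * star J)
        = fromBlocks M.toBlocks₁₁ 0 0 M.toBlocks₂₂ := by
    rw [← fromBlocks_toBlocks M]
    norm_num [J, star_eq_conjTranspose, fromBlocks_conjTranspose, fromBlocks_multiply,
      fromBlocks_smul, fromBlocks_add, ← add_smul, ← sub_eq_add_neg, ← sub_smul]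
  have hZ : (J * Y * star J).PosDef :=
    (IsUnit.posDef_star_right_conjugate_iff (Unitary.isUnit_coe (U := ⟨J, hJ⟩))).mpr hY
  have hY₁₁ : Y.toBlocks₁₁.IsHermitian := hY.1.submatrix _
  have hY₂₂ : Y.toBlocks₂₂.IsHermitian := hY.1.submatrix _
  have key := hg.cfc_le hY hZ (t := 1 / 2) (by norm_num) (by norm_num)
  rw [hpinch, cfc_unitary_conj g hJ hY.1, hpinch, cfc_fromBlocks_zero g hY₁₁ hY₂₂] at key
  simpa using toBlocks₁₁_mono key

theorem OperatorConvex.cfc_conj_add_conj_le (hg : OperatorConvex g)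
    {X₁ : Matrix ι ι ℂ} {X₂ : Matrix κ κ ℂ} (hX₁ : X₁.PosDef) (hX₂ : X₂.PosDef)
    {V₁ : Matrix ι ι ℂ} {V₂ : Matrix κ ι ℂ} (hV₁ : IsUnit V₁) (hV : V₁ᴴ * V₁ + V₂ᴴ * V₂ = 1) :
    cfc g (V₁ᴴ * X₁ * V₁ + V₂ᴴ * X₂ * V₂) ≤ V₁ᴴ * cfc g X₁ * V₁ + V₂ᴴ * cfc g X₂ * V₂ := by
  obtain ⟨B, D, hW⟩ := exists_fromBlocks_mem_unitary hV₁ hV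
  set W := fromBlocks V₁ B V₂ D
  have hΔ := hX₁.fromBlocks_zero hX₂
  have hY : (star W * fromBlocks X₁ 0 0 X₂ * W).PosDef :=
    (IsUnit.posDef_star_left_conjugate_iff (Unitary.isUnit_coe (U := ⟨W, hW⟩))).mpr hΔ
  have hgY : cfc g (star W * fromBlocks X₁ 0 0 X₂ * W)
      = star W * cfc g (fromBlocks X₁ 0 0 X₂) * W := by
    simpa using cfc_unitary_conj g (Unitary.star_mem hW) hΔ.1
  calc cfc g (V₁ᴴ * X₁ * V₁ + V₂ᴴ * X₂ * V₂)
      = cfc g (star W * fromBlocks X₁ 0 0 X₂ * W).toBlocks₁₁ := by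
        rw [toBlocks₁₁_star_mul_fromBlocks_mul]
    _ ≤ (cfc g (star W * fromBlocks X₁ 0 0 X₂ * W)).toBlocks₁₁ := hg.cfc_toBlocks₁₁_le hY
    _ = V₁ᴴ * cfc g X₁ * V₁ + V₂ᴴ * cfc g X₂ * V₂ := by
        rw [hgY, cfc_fromBlocks_zero g hX₁.1 hX₂.1, toBlocks₁₁_star_mul_fromBlocks_mul]

end OperatorConvex

section Perspective

variable {ι κ : Type*} [Fintype ι] [DecidableEq ι] [Fintype κ] [DecidableEq κ]

noncomputable def Matrix.perspective (g : ℝ → ℝ) (X T : Matrix ι ι ℂ) : Matrix ι ι ℂ :=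
  CFC.sqrt T * cfc g ((CFC.sqrt T)⁻¹ * X * (CFC.sqrt T)⁻¹) * CFC.sqrt T

theorem Matrix.perspective_smul (g : ℝ → ℝ) (X : Matrix ι ι ℂ) {T : Matrix ι ι ℂ} (hT : T.PosDef)
    {t : ℝ} (ht : 0 < t) : perspective g (t • X) (t • T) = t • perspective g X T := by
  have hsqrt : CFC.sqrt (t • T) = √t • CFC.sqrt T := by
    refine CFC.sqrt_unique ?_ (smul_nonneg (Real.sqrt_nonneg t) (CFC.sqrt_nonneg T))
    rw [smul_mul_smul_comm, Real.mul_self_sqrt ht.le, CFC.sqrt_mul_sqrt_self T hT.posSemidef.nonneg]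
  have hinv : (√t • CFC.sqrt T)⁻¹ = (√t)⁻¹ • (CFC.sqrt T)⁻¹ := by
    refine inv_eq_left_inv ?_
    rw [smul_mul_smul_comm, inv_mul_cancel₀ (by positivity), nonsing_inv_mul _ hT.isUnit_det_sqrt,
      one_smul]
  have hscalar : (√t)⁻¹ * (t * (√t)⁻¹) = 1 := by
    field_simp
    exact (Real.sq_sqrt ht.le).symm
  simp only [perspective, hsqrt, hinv, smul_mul_assoc, mul_smul_comm, smul_smul, hscalar, one_smul]
  rw [Real.mul_self_sqrt ht.le]

theorem Matrix.perspective_eq_mul_cfc_of_commute (g : ℝ → ℝ) {X T : Matrix ι ι ℂ} (hT : T.PosDef)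
    (hXT : Commute X T) : perspective g X T = T * cfc g (X * T⁻¹) := by
  have hT' : IsUnit T.det := (isUnit_iff_isUnit_det _).mp hT.isUnit
  have hss : CFC.sqrt T * CFC.sqrt T = T := CFC.sqrt_mul_sqrt_self T hT.posSemidef.nonneg
  have hs : IsUnit (CFC.sqrt T) := (isUnit_iff_isUnit_det _).mpr hT.isUnit_det_sqrt
  have hsX : Commute (CFC.sqrt T) X := by rw [CFC.sqrt_eq_cfc]; exact hXT.symm.cfc_nnreal _
  have hsiX : Commute (CFC.sqrt T)⁻¹ X := by
    have h := (show Commute (hs.unit : Matrix ι ι ℂ) X by rwa [hs.unit_spec]).units_inv_left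
    rwa [coe_units_inv, hs.unit_spec] at h
  have hTY : Commute T (X * T⁻¹) := by
    rw [Commute, SemiconjBy, ← Matrix.mul_assoc, ← hXT.eq, Matrix.mul_assoc, mul_nonsing_inv _ hT',
      nonsing_inv_mul_cancel_right _ _ hT', Matrix.mul_one]
  have hsG : Commute (CFC.sqrt T) (cfc g (X * T⁻¹)) := by
    rw [CFC.sqrt_eq_cfc]; exact ((hTY.cfc_nnreal _).symm.cfc_real g).symm
  have hY : (CFC.sqrt T)⁻¹ * X * (CFC.sqrt T)⁻¹ = X * T⁻¹ := by
    rw [hsiX.eq, Matrix.mul_assoc, ← Matrix.mul_inv_rev, hss]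
  rw [perspective, hY, Matrix.mul_assoc, ← hsG.eq, ← Matrix.mul_assoc, hss]

theorem Matrix.perspective_kronecker (g : ℝ → ℝ) {A : Matrix ι ι ℂ} {B : Matrix κ κ ℂ}
    (hA : A.IsHermitian) (hB : B.PosDef) :
    perspective g (A ⊗ₖ 1) (1 ⊗ₖ B) = (1 ⊗ₖ B) * matFun g (A ⊗ₖ B⁻¹) := by
  have hcomm : Commute (A ⊗ₖ (1 : Matrix κ κ ℂ)) ((1 : Matrix ι ι ℂ) ⊗ₖ B) := by
    simp [Commute, SemiconjBy, ← mul_kronecker_mul]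
  have hquot : A ⊗ₖ (1 : Matrix κ κ ℂ) * ((1 : Matrix ι ι ℂ) ⊗ₖ B)⁻¹ = A ⊗ₖ B⁻¹ := by
    rw [inv_kronecker, inv_one, ← mul_kronecker_mul, Matrix.mul_one, Matrix.one_mul]
  have hAB : (A ⊗ₖ B⁻¹).IsHermitian := by
    rw [IsHermitian, conjTranspose_kronecker, hA.eq, hB.1.inv.eq]
  rw [perspective_eq_mul_cfc_of_commute g (PosDef.one.kronecker hB) hcomm, hquot,
    hAB.matFun_eq_cfc]

theorem OperatorConvex.perspective_add_le {g : ℝ → ℝ} (hg : OperatorConvex g)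
    {X₁ X₂ T₁ T₂ : Matrix ι ι ℂ} (hX₁ : X₁.PosDef) (hX₂ : X₂.PosDef) (hT₁ : T₁.PosDef)
    (hT₂ : T₂.PosDef) :
    perspective g (X₁ + X₂) (T₁ + T₂) ≤ perspective g X₁ T₁ + perspective g X₂ T₂ := by
  have hT := hT₁.add hT₂
  set s := CFC.sqrt (T₁ + T₂)
  have hs : IsUnit s.det := hT.isUnit_det_sqrt
  have hsH : sᴴ = s := conjTranspose_sqrt _
  have hsiH : s⁻¹ᴴ = s⁻¹ := by rw [conjTranspose_nonsing_inv, hsH]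
  have hV : (CFC.sqrt T₁ * s⁻¹)ᴴ * (CFC.sqrt T₁ * s⁻¹)
      + (CFC.sqrt T₂ * s⁻¹)ᴴ * (CFC.sqrt T₂ * s⁻¹) = 1 := by
    have hsum : CFC.sqrt T₁ * CFC.sqrt T₁ + CFC.sqrt T₂ * CFC.sqrt T₂ = s * s := by
      rw [CFC.sqrt_mul_sqrt_self T₁ hT₁.posSemidef.nonneg,
        CFC.sqrt_mul_sqrt_self T₂ hT₂.posSemidef.nonneg,
        CFC.sqrt_mul_sqrt_self _ hT.posSemidef.nonneg]
    simp only [conjTranspose_mul, conjTranspose_sqrt, hsiH, Matrix.mul_assoc, ← Matrix.mul_add]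
    simp only [← Matrix.mul_assoc, ← Matrix.add_mul, hsum]
    simp [nonsing_inv_mul s hs, mul_nonsing_inv s hs]
  have hVZV {Tᵢ : Matrix ι ι ℂ} (hTᵢ : Tᵢ.PosDef) (Xᵢ : Matrix ι ι ℂ) :
      (CFC.sqrt Tᵢ * s⁻¹)ᴴ * ((CFC.sqrt Tᵢ)⁻¹ * Xᵢ * (CFC.sqrt Tᵢ)⁻¹) * (CFC.sqrt Tᵢ * s⁻¹)
        = s⁻¹ * Xᵢ * s⁻¹ := by
    simp [conjTranspose_mul, conjTranspose_sqrt, hsiH, Matrix.mul_assoc,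
      mul_nonsing_inv_cancel_left _ _ hTᵢ.isUnit_det_sqrt,
      nonsing_inv_mul_cancel_left _ _ hTᵢ.isUnit_det_sqrt]
  have hsVMVs (Tᵢ Mᵢ : Matrix ι ι ℂ) :
      star s * ((CFC.sqrt Tᵢ * s⁻¹)ᴴ * Mᵢ * (CFC.sqrt Tᵢ * s⁻¹)) * s
        = CFC.sqrt Tᵢ * Mᵢ * CFC.sqrt Tᵢ := by
    simp [star_eq_conjTranspose, hsH, conjTranspose_mul, hsiH, conjTranspose_sqrt,
      Matrix.mul_assoc, mul_nonsing_inv_cancel_left s _ hs, nonsing_inv_mul s hs]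
  have hV₁ : IsUnit (CFC.sqrt T₁ * s⁻¹) := (isUnit_iff_isUnit_det _).mpr <| by
    rw [det_mul]; exact hT₁.isUnit_det_sqrt.mul (isUnit_nonsing_inv_det _ hs)
  have key := star_left_conjugate_le_conjugate (hg.cfc_conj_add_conj_le
    (hT₁.sqrt_inv_mul_mul_sqrt_inv hX₁) (hT₂.sqrt_inv_mul_mul_sqrt_inv hX₂) hV₁ hV) s
  rw [hVZV hT₁, hVZV hT₂, Matrix.mul_add, Matrix.add_mul, hsVMVs, hsVMVs] at key
  simpa [perspective, star_eq_conjTranspose, hsH, Matrix.mul_add, Matrix.add_mul,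
    Matrix.mul_assoc] using key

theorem OperatorConvex.perspective_jointly_convex {g : ℝ → ℝ} (hg : OperatorConvex g)
    {X₁ X₂ T₁ T₂ : Matrix ι ι ℂ} (hX₁ : X₁.PosDef) (hX₂ : X₂.PosDef) (hT₁ : T₁.PosDef)
    (hT₂ : T₂.PosDef) {t : ℝ} (ht₀ : 0 ≤ t) (ht₁ : t ≤ 1) :
    perspective g (t • X₁ + (1 - t) • X₂) (t • T₁ + (1 - t) • T₂)
      ≤ t • perspective g X₁ T₁ + (1 - t) • perspective g X₂ T₂ := by
  rcases ht₀.eq_or_lt with rfl | ht₀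
  · simp
  rcases ht₁.eq_or_lt with rfl | ht₁
  · simp
  have ht₁' : 0 < 1 - t := sub_pos.mpr ht₁
  rw [← perspective_smul g X₁ hT₁ ht₀, ← perspective_smul g X₂ hT₂ ht₁']
  exact hg.perspective_add_le (hX₁.smul ht₀) (hX₂.smul ht₁') (hT₁.smul ht₀) (hT₂.smul ht₁')

end Perspective

theorem jointConvexity_kron_matFun_general (g : ℝ → ℝ) (hg : OperatorConvex g)
    {m n : ℕ} (A₁ A₂ : Matrix (Fin m) (Fin m) ℂ) (B₁ B₂ : Matrix (Fin n) (Fin n) ℂ)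
    (hA₁ : A₁.PosDef) (hA₂ : A₂.PosDef) (hB₁ : B₁.PosDef) (hB₂ : B₂.PosDef)
    (t : ℝ) (ht0 : 0 ≤ t) (ht1 : t ≤ 1) :
    (t • ((1 ⊗ₖ B₁) * matFun g (A₁ ⊗ₖ B₁⁻¹))
      + (1 - t) • ((1 ⊗ₖ B₂) * matFun g (A₂ ⊗ₖ B₂⁻¹))
      - (1 ⊗ₖ (t • B₁ + (1 - t) • B₂)) *
          matFun g ((t • A₁ + (1 - t) • A₂) ⊗ₖ (t • B₁ + (1 - t) • B₂)⁻¹)).PosSemidef := by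
  have key := hg.perspective_jointly_convex (hA₁.kronecker PosDef.one)
    (hA₂.kronecker PosDef.one) (PosDef.one.kronecker hB₁) (PosDef.one.kronecker hB₂) ht0 ht1
  rwa [← smul_kronecker, ← smul_kronecker, ← add_kronecker, ← kronecker_smul, ← kronecker_smul,
    ← kronecker_add, perspective_kronecker g hA₁.1 hB₁, perspective_kronecker g hA₂.1 hB₂,
    perspective_kronecker g (hA₁.convex_comb hA₂ ht0 ht1).1 (hB₁.convex_comb hB₂ ht0 ht1)] at key

/-- For `g` operator convex with `g(1) = 0`, the map
`(A, B) ↦ (I ⊗ B) g(A ⊗ B⁻¹)` on pairs of positive definite matrices is jointly convex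
in the Loewner order. -/
theorem jointConvexity_kron_matFun (g : ℝ → ℝ) (hg : OperatorConvex g) (hg1 : g 1 = 0)
    {m n : ℕ} (A₁ A₂ : Matrix (Fin m) (Fin m) ℂ) (B₁ B₂ : Matrix (Fin n) (Fin n) ℂ)
    (hA₁ : A₁.PosDef) (hA₂ : A₂.PosDef) (hB₁ : B₁.PosDef) (hB₂ : B₂.PosDef)
    (t : ℝ) (ht0 : 0 ≤ t) (ht1 : t ≤ 1) :
    (t • ((1 ⊗ₖ B₁) * matFun g (A₁ ⊗ₖ B₁⁻¹))
      + (1 - t) • ((1 ⊗ₖ B₂) * matFun g (A₂ ⊗ₖ B₂⁻¹))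
      - (1 ⊗ₖ (t • B₁ + (1 - t) • B₂)) *
          matFun g ((t • A₁ + (1 - t) • A₂) ⊗ₖ (t • B₁ + (1 - t) • B₂)⁻¹)).PosSemidef :=
  jointConvexity_kron_matFun_general g hg A₁ A₂ B₁ B₂ hA₁ hA₂ hB₁ hB₂ t ht0 ht1
end

section
/- The function f(x) = x log x is operator convex on (0,∞): for every size n, all positive definite n×n complex matrices A, B, and all t ∈ [0,1], f(tA + (1−t)B) ≤ t f(A) + (1−t) f(B) in the Loewner order. -/
open Matrix
open scoped ComplexOrder

/-!
Inversion is operator convex: for `X > 0` the block matrix `[[X, 1], [1, X⁻¹]]` is positive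
semidefinite (its Schur complement vanishes), such block matrices are closed under convex
combinations, and the Schur complement of the combination is `t A⁻¹ + (1 - t) B⁻¹ - M⁻¹`. Hence
every resolvent `x ↦ (x + s)⁻¹`, `s ≥ 0`, is operator convex.

Testing the gap `t f(A) + (1 - t) f(B) - f(M)`, `M = t A + (1 - t) B`, against a vector `v` gives
`∑ c_k f(x_k)`, a signed combination of point evaluations at the eigenvalues of `A`, `B` and `M`.
It vanishes on `1` and on `x`, and is nonnegative on every resolvent. For such a combination the
function `R ↦ ∑ c_k x_k log (x_k + R)` has derivative `-R ∑ c_k (x_k + R)⁻¹ ≤ 0` on `[0, ∞)` and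
tends to `0` at infinity, so its value `∑ c_k x_k log x_k` at `R = 0` is nonnegative.
-/

open Real Filter Topology Finset

section Scalar

variable {ι : Type*} [Fintype ι]

lemma tendsto_sum_mul_log_add_atTop {a x : ι → ℝ} (ha : ∑ i, a i = 0) :
    Tendsto (fun R => ∑ i, a i * log (x i + R)) atTop (𝓝 0) := by
  have h : Tendsto (fun R => ∑ i, a i * (log (R + x i) - log R)) atTop (𝓝 (∑ i, a i * 0)) :=
    tendsto_finsetSum _ fun i _ => (tendsto_log_comp_add_sub_log (x i)).const_mul (a i)
  rw [Fintype.sum_eq_zero _ fun i => mul_zero (a i)] at h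
  refine h.congr fun R => ?_
  simp only [mul_sub, sum_sub_distrib, ← sum_mul, ha, zero_mul, sub_zero, add_comm]

theorem sum_mul_mul_log_nonneg {c x : ι → ℝ} (hx : ∀ i, 0 < x i) (h0 : ∑ i, c i = 0)
    (h1 : ∑ i, c i * x i = 0) (hres : ∀ s, 0 ≤ s → 0 ≤ ∑ i, c i * (x i + s)⁻¹) :
    0 ≤ ∑ i, c i * (x i * log (x i)) := by
  set φ : ℝ → ℝ := fun R => ∑ i, c i * x i * log (x i + R)
  have hφ' : ∀ R, 0 ≤ R → HasDerivAt φ (∑ i, c i * x i * (1 / (x i + R))) R := fun R hR => by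
    refine HasDerivAt.fun_sum fun i _ => ?_
    exact (((hasDerivAt_id R).const_add (x i)).log (add_pos_of_pos_of_nonneg (hx i) hR).ne').const_mul _
  have hφ'_nonpos : ∀ R, 0 ≤ R → ∑ i, c i * x i * (1 / (x i + R)) ≤ 0 := fun R hR => by
    have hsplit : ∑ i, c i * x i * (1 / (x i + R)) = ∑ i, c i - R * ∑ i, c i * (x i + R)⁻¹ := by
      rw [mul_sum, ← sum_sub_distrib]
      refine sum_congr rfl fun i _ => ?_
      field_simp [(add_pos_of_pos_of_nonneg (hx i) hR).ne']
      ring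
    rw [hsplit, h0, zero_sub, neg_nonpos]
    exact mul_nonneg hR (hres R hR)
  have hanti : AntitoneOn φ (Set.Ici 0) := by
    refine antitoneOn_of_deriv_nonpos (convex_Ici 0)
      (fun R hR => (hφ' R hR).continuousAt.continuousWithinAt) ?_ ?_ <;> rw [interior_Ici]
    · exact fun R hR => (hφ' R hR.le).differentiableAt.differentiableWithinAt
    · exact fun R hR => (hφ' R hR.le).deriv ▸ hφ'_nonpos R hR.le
  have hφ0 : φ 0 = ∑ i, c i * (x i * log (x i)) := by simp [φ, mul_assoc]
  rw [← hφ0]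
  exact le_of_tendsto (tendsto_sum_mul_log_add_atTop h1) <| eventually_atTop.mpr
    ⟨0, fun R hR => hanti Set.self_mem_Ici (Set.mem_Ici.mpr hR) hR⟩

end Scalar

namespace Matrix

variable {m 𝕜 : Type*} [RCLike 𝕜] {A B : Matrix m m 𝕜}

lemma IsHermitian.smul_add_one_sub_smul (hA : A.IsHermitian) (hB : B.IsHermitian) (t : ℝ) :
    (t • A + (1 - t) • B).IsHermitian :=
  (hA.smul (.all t)).add (hB.smul (.all (1 - t)))

lemma PosDef.smul_add_one_sub_smul (hA : A.PosDef) (hB : B.PosDef) {t : ℝ} (ht0 : 0 ≤ t)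
    (ht1 : t ≤ 1) : (t • A + (1 - t) • B).PosDef := by
  rcases ht0.eq_or_lt with rfl | ht0
  · simpa using hB
  · exact (hA.smul ht0).add_posSemidef (hB.posSemidef.smul (sub_nonneg.mpr ht1))

variable [Fintype m] [DecidableEq m]

lemma PosDef.posSemidef_fromBlocks_one_inv (hA : A.PosDef) :
    (fromBlocks A 1 1 A⁻¹).PosSemidef := by
  let := hA.isUnit.invertible
  simpa using (PosDef.fromBlocks₁₁ (1 : Matrix m m 𝕜) A⁻¹ hA).mpr (by simpa using .zero)

theorem PosDef.posSemidef_smul_inv_add_smul_inv_sub_inv (hA : A.PosDef) (hB : B.PosDef)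
    {t : ℝ} (ht0 : 0 ≤ t) (ht1 : t ≤ 1) :
    (t • A⁻¹ + (1 - t) • B⁻¹ - (t • A + (1 - t) • B)⁻¹).PosSemidef := by
  have hM := hA.smul_add_one_sub_smul hB ht0 ht1
  let := hM.isUnit.invertible
  have hblocks : fromBlocks (t • A + (1 - t) • B) 1 1 (t • A⁻¹ + (1 - t) • B⁻¹) =
      t • fromBlocks A 1 1 A⁻¹ + (1 - t) • fromBlocks B 1 1 B⁻¹ := by
    rw [fromBlocks_smul, fromBlocks_smul, fromBlocks_add, ← add_smul, add_sub_cancel, one_smul]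
  have hpsd : (fromBlocks (t • A + (1 - t) • B) 1 1 (t • A⁻¹ + (1 - t) • B⁻¹)).PosSemidef :=
    hblocks ▸ (hA.posSemidef_fromBlocks_one_inv.smul ht0).add
      (hB.posSemidef_fromBlocks_one_inv.smul (sub_nonneg.mpr ht1))
  simpa using (PosDef.fromBlocks₁₁ (1 : Matrix m m 𝕜) _ hM).mp (by simpa using hpsd)

end Matrix

section matFun

variable {m : Type*} [Fintype m] [DecidableEq m] {X : Matrix m m ℂ}

noncomputable def spectralWeight (hX : X.IsHermitian) (v : m → ℂ) (i : m) : ℝ :=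
  ‖(star (hX.eigenvectorUnitary : Matrix m m ℂ) *ᵥ v) i‖ ^ 2

lemma matFun_eq_cfc (f : ℝ → ℝ) (hX : X.IsHermitian) : matFun f X = cfc f X := by
  rw [hX.cfc_eq, IsHermitian.cfc, Unitary.conjStarAlgAut_apply, matFun, dif_pos hX]
  rfl

lemma isHermitian_matFun (f : ℝ → ℝ) (hX : X.IsHermitian) : (matFun f X).IsHermitian :=
  matFun_eq_cfc f hX ▸ cfc_predicate f X

lemma matFun_const_one (hX : X.IsHermitian) : matFun (fun _ => 1) X = 1 :=
  (matFun_eq_cfc _ hX).trans (cfc_const_one ℝ X)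

lemma matFun_id (hX : X.IsHermitian) : matFun (fun x => x) X = X :=
  (matFun_eq_cfc _ hX).trans (cfc_id' ℝ X)

lemma matFun_add_const_inv (hX : X.PosDef) {s : ℝ} (hs : 0 ≤ s) :
    matFun (fun x => (x + s)⁻¹) X = (X + s • 1)⁻¹ := by
  have hspec : ∀ x ∈ spectrum ℝ X, x + s ≠ 0 := by
    rw [hX.isHermitian.spectrum_real_eq_range_eigenvalues]
    rintro - ⟨i, rfl⟩
    linarith [hX.eigenvalues_pos i]
  have : IsSelfAdjoint X := hX.isHermitian
  rw [matFun_eq_cfc _ hX.isHermitian, cfc_inv _ X hspec, cfc_add_const s _ X, cfc_id' ℝ X,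
    Algebra.algebraMap_eq_smul_one, nonsing_inv_eq_ringInverse]

lemma star_dotProduct_matFun_mulVec (f : ℝ → ℝ) (hX : X.IsHermitian) (v : m → ℂ) :
    star v ⬝ᵥ (matFun f X *ᵥ v) = ↑(∑ i, spectralWeight hX v i * f (hX.eigenvalues i)) := by
  set U : Matrix m m ℂ := (hX.eigenvectorUnitary : Matrix m m ℂ)
  have hU : star v ᵥ* U = star (star U *ᵥ v) := by
    rw [star_mulVec, star_eq_conjTranspose, conjTranspose_conjTranspose]
  rw [matFun, dif_pos hX, ← mulVec_mulVec, ← mulVec_mulVec, dotProduct_mulVec, hU]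
  simp only [dotProduct, mulVec_diagonal, Pi.star_apply, Complex.ofReal_sum, Complex.ofReal_mul,
    spectralWeight, Complex.ofReal_pow]
  refine sum_congr rfl fun i _ => ?_
  rw [Complex.star_def, mul_left_comm, Complex.conj_mul', mul_comm]

end matFun

section jensenGap

variable {m : Type*} [Fintype m] [DecidableEq m] {A B : Matrix m m ℂ} {t : ℝ}

noncomputable def jensenGap (f : ℝ → ℝ) (t : ℝ) (A B : Matrix m m ℂ) : Matrix m m ℂ :=
  t • matFun f A + (1 - t) • matFun f B - matFun f (t • A + (1 - t) • B)

lemma isHermitian_jensenGap (f : ℝ → ℝ) (hA : A.IsHermitian) (hB : B.IsHermitian) :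
    (jensenGap f t A B).IsHermitian :=
  (((isHermitian_matFun f hA).smul (.all t)).add
    ((isHermitian_matFun f hB).smul (.all (1 - t)))).sub
    (isHermitian_matFun f (hA.smul_add_one_sub_smul hB t))

lemma jensenGap_const_one (hA : A.IsHermitian) (hB : B.IsHermitian) :
    jensenGap (fun _ => 1) t A B = 0 := by
  rw [jensenGap, matFun_const_one hA, matFun_const_one hB,
    matFun_const_one (hA.smul_add_one_sub_smul hB t)]
  module

lemma jensenGap_id (hA : A.IsHermitian) (hB : B.IsHermitian) :
    jensenGap (fun x => x) t A B = 0 := by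
  rw [jensenGap, matFun_id hA, matFun_id hB, matFun_id (hA.smul_add_one_sub_smul hB t), sub_self]

lemma posSemidef_jensenGap_add_const_inv (hA : A.PosDef) (hB : B.PosDef) (ht0 : 0 ≤ t)
    (ht1 : t ≤ 1) {s : ℝ} (hs : 0 ≤ s) :
    (jensenGap (fun x => (x + s)⁻¹) t A B).PosSemidef := by
  have hshift : ∀ {X : Matrix m m ℂ}, X.PosDef → (X + s • 1).PosDef :=
    fun hX => hX.add_posSemidef (PosSemidef.one.smul hs)
  have hcomb : t • A + (1 - t) • B + s • 1 = t • (A + s • 1) + (1 - t) • (B + s • 1) := by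
    module
  rw [jensenGap, matFun_add_const_inv hA hs, matFun_add_const_inv hB hs,
    matFun_add_const_inv (hA.smul_add_one_sub_smul hB ht0 ht1) hs, hcomb]
  exact (hshift hA).posSemidef_smul_inv_add_smul_inv_sub_inv (hshift hB) ht0 ht1

lemma exists_star_dotProduct_jensenGap_mulVec_eq_sum (hA : A.PosDef) (hB : B.PosDef)
    (ht0 : 0 ≤ t) (ht1 : t ≤ 1) (v : m → ℂ) :
    ∃ c x : m ⊕ m ⊕ m → ℝ, (∀ k, 0 < x k) ∧
      ∀ f, star v ⬝ᵥ (jensenGap f t A B *ᵥ v) = ↑(∑ k, c k * f (x k)) := by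
  have hM := hA.smul_add_one_sub_smul hB ht0 ht1
  refine ⟨Sum.elim (t • spectralWeight hA.1 v)
      (Sum.elim ((1 - t) • spectralWeight hB.1 v) (-spectralWeight hM.1 v)),
    Sum.elim hA.1.eigenvalues (Sum.elim hB.1.eigenvalues hM.1.eigenvalues),
    fun k => ?_, fun f => ?_⟩
  · rcases k with i | i | i
    exacts [hA.eigenvalues_pos i, hB.eigenvalues_pos i, hM.eigenvalues_pos i]
  rw [jensenGap, sub_mulVec, add_mulVec, smul_mulVec, smul_mulVec, dotProduct_sub,
    dotProduct_add, dotProduct_smul, dotProduct_smul, star_dotProduct_matFun_mulVec f hA.1,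
    star_dotProduct_matFun_mulVec f hB.1, star_dotProduct_matFun_mulVec f hM.1]
  simp only [Fintype.sum_sum_type, Sum.elim_inl, Sum.elim_inr, Pi.smul_apply, Pi.neg_apply,
    smul_eq_mul, mul_assoc, neg_mul, sum_neg_distrib, ← mul_sum, Complex.real_smul]
  push_cast
  ring

end jensenGap

/-- The function `x ↦ x log x` is operator convex on `(0, ∞)`. -/
theorem operatorConvex_mul_log
    {n : ℕ} (A B : Matrix (Fin n) (Fin n) ℂ) (hA : A.PosDef) (hB : B.PosDef)
    (t : ℝ) (ht0 : 0 ≤ t) (ht1 : t ≤ 1) :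
    (t • matFun (fun x => x * Real.log x) A + (1 - t) • matFun (fun x => x * Real.log x) B
      - matFun (fun x => x * Real.log x) (t • A + (1 - t) • B)).PosSemidef := by
  change (jensenGap (fun x => x * log x) t A B).PosSemidef
  refine .of_dotProduct_mulVec_nonneg (isHermitian_jensenGap _ hA.1 hB.1) fun v => ?_
  obtain ⟨c, x, hx, hcx⟩ := exists_star_dotProduct_jensenGap_mulVec_eq_sum hA hB ht0 ht1 v
  have hsum_eq_zero : ∀ g, jensenGap g t A B = 0 → ∑ k, c k * g (x k) = 0 := fun g h =>
    Complex.ofReal_eq_zero.mp <| (hcx g).symm.trans <| by rw [h, zero_mulVec, dotProduct_zero]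
  rw [hcx]
  refine Complex.zero_le_real.mpr (sum_mul_mul_log_nonneg hx ?_ ?_ fun s hs => ?_)
  · simpa using hsum_eq_zero _ (jensenGap_const_one hA.1 hB.1)
  · exact hsum_eq_zero _ (jensenGap_id hA.1 hB.1)
  · have := (posSemidef_jensenGap_add_const_inv hA hB ht0 ht1 hs).dotProduct_mulVec_nonneg v
    rwa [hcx, Complex.zero_le_real] at this
end

section
/- For every q ∈ [−1,0), the function f(x) = x^q is operator convex on (0,∞): for every size n, all positive definite n×n complex matrices A, B, and all t ∈ [0,1], (tA + (1−t)B)^q ≤ t A^q + (1−t) B^q in the Loewner order. -/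
/-!
For `-1 < p < 0` and `x > 0`, substituting `t ↦ x t` gives
`x ^ p = c⁻¹ * ∫ t in (0, ∞), t ^ p * (t + x)⁻¹` with `c = ∫ t in (0, ∞), t ^ p * (t + 1)⁻¹`.
Through the continuous functional calculus this writes `a ^ p` as an integral of the resolvents
`t ^ p • (t + a)⁻¹` with nonnegative weights; each of these is operator convex because the
inverse is, and convexity passes to the integral. The endpoints are the inverse (`p = -1`) and a
constant (`p = 0`). For matrices, `matFun` is the continuous functional calculus.
-/

open Matrix
open scoped ComplexOrder

open Set MeasureTheory

namespace Real

variable {p x : ℝ}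

lemma continuousOn_rpow_mul_inv_add (hx : 0 ≤ x) :
    ContinuousOn (fun t : ℝ => t ^ p * (t + x)⁻¹) (Ioi 0) :=
  (continuousOn_id.rpow_const fun _ ht => Or.inl (ne_of_gt ht)).mul <|
    (continuousOn_id.add continuousOn_const).inv₀ fun _ ht => (add_pos_of_pos_of_nonneg ht hx).ne'

lemma integrableOn_rpow_mul_inv_add (hp : p ∈ Ioo (-1) 0) (hx : 0 < x) :
    IntegrableOn (fun t : ℝ => t ^ p * (t + x)⁻¹) (Ioi 0) := by
  have hcont := continuousOn_rpow_mul_inv_add (p := p) hx.le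
  rw [← Ioo_union_Ici_eq_Ioi zero_lt_one]
  refine IntegrableOn.union ?_ ?_
  · refine Integrable.mono' ((intervalIntegral.integrableOn_Ioo_rpow_iff one_pos).2 hp.1
      |>.mul_const x⁻¹) ((hcont.mono Ioo_subset_Ioi_self).aestronglyMeasurable measurableSet_Ioo) ?_
    filter_upwards [ae_restrict_mem measurableSet_Ioo] with t ht
    have : 0 < t := ht.1
    rw [norm_of_nonneg (by positivity)]
    gcongr
    linarith
  · rw [integrableOn_Ici_iff_integrableOn_Ioi]
    refine Integrable.mono' (integrableOn_Ioi_rpow_of_lt (by linarith [hp.2]) one_pos (a := p - 1))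
      ((hcont.mono (Ioi_subset_Ioi zero_le_one)).aestronglyMeasurable measurableSet_Ioi) ?_
    filter_upwards [ae_restrict_mem measurableSet_Ioi] with t (ht : 1 < t)
    rw [norm_of_nonneg (by positivity), rpow_sub_one (by positivity), div_eq_mul_inv]
    gcongr
    linarith

lemma integral_rpow_mul_inv_add (hx : 0 < x) :
    ∫ t in Ioi 0, t ^ p * (t + x)⁻¹ = x ^ p * ∫ t in Ioi 0, t ^ p * (t + 1)⁻¹ := by
  have h := integral_comp_mul_left_Ioi (fun t : ℝ => t ^ p * (t + x)⁻¹) 0 hx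
  have hscale : EqOn (fun t : ℝ => (x * t) ^ p * (x * t + x)⁻¹)
      (fun t => x⁻¹ * (x ^ p * (t ^ p * (t + 1)⁻¹))) (Ioi 0) := by
    intro t (ht : 0 < t)
    dsimp only
    rw [mul_rpow hx.le ht.le, ← mul_add_one, mul_inv]
    ring
  rw [mul_zero, setIntegral_congr_fun measurableSet_Ioi hscale, integral_const_mul,
    integral_const_mul, smul_eq_mul] at h
  exact (mul_left_cancel₀ (inv_ne_zero hx.ne') h).symm

lemma integral_rpow_mul_inv_add_one_pos (hp : p ∈ Ioo (-1) 0) :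
    0 < ∫ t in Ioi (0 : ℝ), t ^ p * (t + 1)⁻¹ := by
  have hpos : ∀ t ∈ Ioi (0 : ℝ), 0 < t ^ p * (t + 1)⁻¹ := fun t (ht : 0 < t) => by positivity
  rw [setIntegral_pos_iff_support_of_nonneg_ae
    ((ae_restrict_mem measurableSet_Ioi).mono fun t ht => (hpos t ht).le)
    (integrableOn_rpow_mul_inv_add hp one_pos)]
  exact lt_of_lt_of_le (by simp) (measure_mono fun t ht => ⟨(hpos t ht).ne', ht⟩)

end Real

namespace CFC

open Real

variable {A : Type*} [CStarAlgebra A] [PartialOrder A] [StarOrderedRing A] {p : ℝ}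

lemma _root_.IsStrictlyPositive.exists_pos_le_of_mem_spectrum {a : A}
    (ha : IsStrictlyPositive a) : ∃ m > 0, ∀ z ∈ spectrum ℝ a, m ≤ z := by
  rcases (spectrum ℝ a).eq_empty_or_nonempty with h | h
  · exact ⟨1, one_pos, by simp [h]⟩
  · have hcompact : IsCompact (spectrum ℝ a) := isCompact_iff_compactSpace.mpr inferInstance
    obtain ⟨m, hm, hmin⟩ := hcompact.exists_isMinOn h continuousOn_id
    exact ⟨m, ha.spectrum_pos hm, hmin⟩

lemma cfc_rpow_mul_inv_add {t : ℝ} (ht : 0 < t) {a : A} (ha : 0 ≤ a) :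
    cfc (fun x => t ^ p * (t + x)⁻¹) a = t ^ p • Ring.inverse (algebraMap ℝ A t + a) := by
  have hspec : ∀ x ∈ spectrum ℝ a, t + x ≠ 0 := fun x hx =>
    (add_pos_of_pos_of_nonneg ht (spectrum_nonneg_of_nonneg ha hx)).ne'
  have hinv : ContinuousOn (fun x : ℝ => (t + x)⁻¹) (spectrum ℝ a) :=
    (continuousOn_const.add continuousOn_id).inv₀ hspec
  rw [cfc_const_mul _ _ a hinv, cfc_inv _ a hspec, cfc_const_add _ _ a, cfc_id' ℝ a]

lemma convexOn_cfc_rpow_mul_inv_add {t : ℝ} (ht : 0 < t) :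
    ConvexOn ℝ (Ici 0) (cfc (fun x => t ^ p * (t + x)⁻¹) : A → A) :=
  ((CStarAlgebra.convexOn_ringInverse_algebraMap_add ht).smul (Real.rpow_nonneg ht.le p)).congr
    fun _ ha => (cfc_rpow_mul_inv_add ht ha).symm

lemma integrableOn_cfc_and_rpow_eq_smul_integral (hp : p ∈ Ioo (-1) 0) {a : A}
    (ha : IsStrictlyPositive a) :
    IntegrableOn (fun t : ℝ => cfc (fun x => t ^ p * (t + x)⁻¹) a) (Ioi 0) ∧
      a ^ p = (∫ t in Ioi (0 : ℝ), t ^ p * (t + 1)⁻¹)⁻¹ •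
        ∫ t in Ioi (0 : ℝ), cfc (fun x => t ^ p * (t + x)⁻¹) a := by
  obtain ⟨m, hm, hle⟩ := ha.exists_pos_le_of_mem_spectrum
  have hcont : ContinuousOn (Function.uncurry fun t x : ℝ => t ^ p * (t + x)⁻¹)
      (Ioi 0 ×ˢ spectrum ℝ a) :=
    (continuousOn_fst.rpow_const fun z hz => Or.inl (ne_of_gt hz.1)).mul <|
      (continuousOn_fst.add continuousOn_snd).inv₀ fun z hz =>
        (add_pos hz.1 (ha.spectrum_pos hz.2)).ne'
  have hbound : ∀ᵐ t ∂(volume.restrict (Ioi (0 : ℝ))), ∀ x ∈ spectrum ℝ a,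
      ‖t ^ p * (t + x)⁻¹‖ ≤ t ^ p * (t + m)⁻¹ := by
    filter_upwards [ae_restrict_mem measurableSet_Ioi] with t (ht : 0 < t) x hx
    have := ha.spectrum_pos hx
    rw [norm_of_nonneg (by positivity)]
    gcongr
    exact hle x hx
  have hint : HasFiniteIntegral (fun t : ℝ => t ^ p * (t + m)⁻¹) (volume.restrict (Ioi 0)) :=
    (integrableOn_rpow_mul_inv_add hp hm).2
  have hrep_cont :
      ContinuousOn (fun x => ∫ t in Ioi (0 : ℝ), t ^ p * (t + x)⁻¹) (spectrum ℝ a) :=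
    ((continuousOn_id.rpow_const fun x hx => Or.inl (ha.spectrum_pos hx).ne').mul
      continuousOn_const).congr fun x hx => integral_rpow_mul_inv_add (ha.spectrum_pos hx)
  refine ⟨integrableOn_cfc measurableSet_Ioi _ _ a hcont hbound hint ha.isSelfAdjoint, ?_⟩
  rw [← cfc_setIntegral measurableSet_Ioi _ _ a hcont hbound hint ha.isSelfAdjoint,
    ← cfc_const_mul _ _ a hrep_cont, rpow_eq_cfc_real ha.nonneg]
  refine cfc_congr fun x hx => ?_
  rw [integral_rpow_mul_inv_add (ha.spectrum_pos hx), mul_comm,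
    mul_inv_cancel_right₀ (integral_rpow_mul_inv_add_one_pos hp).ne']

lemma convexOn_rpow_of_mem_Ioo (hp : p ∈ Ioo (-1) 0) :
    ConvexOn ℝ {a : A | IsStrictlyPositive a} (fun a : A => a ^ p) := by
  have hconvex : Convex ℝ {a : A | IsStrictlyPositive a} := CStarAlgebra.convexOn_ringInverse.1
  have hrep := fun (a : A) (ha : IsStrictlyPositive a) =>
    integrableOn_cfc_and_rpow_eq_smul_integral hp ha
  refine ConvexOn.congr ?_ fun a ha => (hrep a ha).2.symm
  refine .smul (_root_.inv_nonneg.2 (integral_rpow_mul_inv_add_one_pos hp).le) ?_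
  refine integral_convexOn_of_integrand_ae hconvex ?_ fun a ha => (hrep a ha).1
  filter_upwards [ae_restrict_mem measurableSet_Ioi] with t ht
  exact (convexOn_cfc_rpow_mul_inv_add ht).subset (fun a ha => ha.nonneg) hconvex

theorem convexOn_rpow_of_mem_Icc (hp : p ∈ Icc (-1) 0) :
    ConvexOn ℝ {a : A | IsStrictlyPositive a} (fun a : A => a ^ p) := by
  have hconvex : Convex ℝ {a : A | IsStrictlyPositive a} := CStarAlgebra.convexOn_ringInverse.1
  rcases hp.1.eq_or_lt with rfl | hp₁
  · exact CStarAlgebra.convexOn_ringInverse.congr fun a ha => inverse_eq_rpow_neg_one ha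
  rcases hp.2.eq_or_lt with rfl | hp₂
  · exact (convexOn_const 1 hconvex).congr fun a ha => (rpow_zero a ha.nonneg).symm
  exact convexOn_rpow_of_mem_Ioo ⟨hp₁, hp₂⟩

end CFC

theorem matFun_eq_cfc_s6 {n : Type*} [Fintype n] [DecidableEq n] (f : ℝ → ℝ) (A : Matrix n n ℂ) :
    matFun f A = cfc f A := by
  by_cases hA : A.IsHermitian
  · rw [hA.cfc_eq, matFun, dif_pos hA, IsHermitian.cfc, Unitary.conjStarAlgAut_apply]
    rfl
  · rw [matFun, dif_neg hA]
    exact (cfc_apply_of_not_predicate A hA).symm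

section

-- The L2 operator norm only serves to make matrices a C⋆-algebra: neither `cfc` nor the
-- Loewner order depends on it.
open scoped MatrixOrder Matrix.Norms.L2Operator

theorem Matrix.convexOn_cfc_rpow {n : Type*} [Fintype n] [DecidableEq n] {q : ℝ}
    (hq : q ∈ Icc (-1) 0) :
    ConvexOn ℝ {A : Matrix n n ℂ | A.PosDef} (cfc fun x : ℝ => x ^ q) := by
  simp_rw [← isStrictlyPositive_iff_posDef]
  exact (CFC.convexOn_rpow_of_mem_Icc hq).congr fun A hA => CFC.rpow_eq_cfc_real hA.nonneg

end

/-- For `q ∈ [−1, 0)`, the function `x ↦ x ^ q` is operator convex on `(0, ∞)`. -/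
theorem operatorConvex_rpow_of_neg
    (q : ℝ) (hq1 : -1 ≤ q) (hq0 : q < 0)
    {n : ℕ} (A B : Matrix (Fin n) (Fin n) ℂ) (hA : A.PosDef) (hB : B.PosDef)
    (t : ℝ) (ht0 : 0 ≤ t) (ht1 : t ≤ 1) :
    (t • matFun (fun x => x ^ q) A + (1 - t) • matFun (fun x => x ^ q) B
      - matFun (fun x => x ^ q) (t • A + (1 - t) • B)).PosSemidef := by
  simp only [matFun_eq_cfc_s6]
  exact (Matrix.convexOn_cfc_rpow ⟨hq1, hq0.le⟩).2 hA hB ht0 (sub_nonneg.2 ht1)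
    (add_sub_cancel t 1)
end

section
/- Fix p ∈ [−1,0) ∪ (0,1) ∪ (1,2] and an m×n complex matrix K. The map (A, B) ↦ (1/(p(1−p))) · Tr(K* A^p K B^{1−p}), defined for positive definite m×m matrices A and positive definite n×n matrices B, is jointly concave: for positive definite A₁, A₂, B₁, B₂ and t ∈ [0,1], its value at (tA₁+(1−t)A₂, tB₁+(1−t)B₂) is at least t times its value at (A₁,B₁) plus (1−t) times its value at (A₂,B₂). In particular, for p ∈ (1,2], (A,B) ↦ Tr(K* A^p K B^{1−p}) is jointly convex. -/
/-!
In eigenbases `U`, `V` of `A` and `B` the trace is `∑ᵢⱼ aᵢ ^ p * bⱼ ^ (1 - p) * |(U* K V)ᵢⱼ|²`;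
every kernel `φ(a, b)` defines a function of `(A, B)` in the same way.

For `0 < p < 1`, `a ^ p * b ^ (1 - p)` is a positive multiple of
`∫₀^∞ s ^ (p - 1) * a b / (a + s b) ds`, and the kernel `a b / (a + s b)` gives
`inf_X (s⁻¹ Tr X* A X + Tr (K - X)* (K - X) B)`, an infimum of linear functions of `(A, B)`,
hence concave. For `1 < p < 2`, `a ^ p * b ^ (1 - p)` is a positive multiple of
`∫₀^∞ s ^ (p - 2) * a² / (a + s b) ds`, and the kernel `a² / (a + s b) = a - s * a b / (a + s b)`
gives a convex function; for `p = 2` the kernel `a² / b` gives the supremum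
`sup_W (2 Re Tr W* A K - Tr W* W B)`, again convex. The range `-1 ≤ p < 0` follows from
`Tr (K* A^p K B^(1-p)) = Tr (K B^(1-p) K* A^p)`, which exchanges `p` with `1 - p`.
-/

open Matrix
open scoped ComplexOrder

open MeasureTheory Set

section Convexity

variable {E : Type*} [AddCommGroup E] [Module ℝ E] {S : Set E} {f : E → ℝ}

theorem ConcaveOn.of_isLeast {ι : Type*} {L : ι → E → ℝ} (hS : Convex ℝ S)
    (hL : ∀ i, ConcaveOn ℝ S (L i)) (hf : ∀ x ∈ S, IsLeast (range fun i => L i x) (f x)) :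
    ConcaveOn ℝ S f := by
  refine ⟨hS, fun x hx y hy a b ha hb hab => ?_⟩
  obtain ⟨⟨i, hi⟩, -⟩ := hf _ (hS hx hy ha hb hab)
  calc a • f x + b • f y ≤ a • L i x + b • L i y := by
        gcongr
        · exact (hf x hx).2 ⟨i, rfl⟩
        · exact (hf y hy).2 ⟨i, rfl⟩
    _ ≤ L i (a • x + b • y) := (hL i).2 hx hy ha hb hab
    _ = f (a • x + b • y) := hi

theorem ConvexOn.of_isGreatest {ι : Type*} {L : ι → E → ℝ} (hS : Convex ℝ S)
    (hL : ∀ i, ConvexOn ℝ S (L i)) (hf : ∀ x ∈ S, IsGreatest (range fun i => L i x) (f x)) :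
    ConvexOn ℝ S f := by
  refine ⟨hS, fun x hx y hy a b ha hb hab => ?_⟩
  obtain ⟨⟨i, hi⟩, -⟩ := hf _ (hS hx hy ha hb hab)
  calc f (a • x + b • y) = L i (a • x + b • y) := hi.symm
    _ ≤ a • L i x + b • L i y := (hL i).2 hx hy ha hb hab
    _ ≤ a • f x + b • f y := by
        gcongr
        · exact (hf x hx).2 ⟨i, rfl⟩
        · exact (hf y hy).2 ⟨i, rfl⟩

theorem ConvexOn.concaveOn_const_mul {c : ℝ} (hc : c ≤ 0) (hf : ConvexOn ℝ S f) :
    ConcaveOn ℝ S fun x => c * f x := by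
  rw [← neg_convexOn_iff, show (-fun x => c * f x) = fun x => -c • f x by ext; simp]
  exact hf.smul (neg_nonneg.2 hc)

variable {α : Type*} [MeasurableSpace α] {μ : Measure α}

theorem ConcaveOn.integral {F : α → E → ℝ} (hS : Convex ℝ S)
    (hF : ∀ᵐ a ∂μ, ConcaveOn ℝ S (F a)) (hint : ∀ x ∈ S, Integrable (F · x) μ) :
    ConcaveOn ℝ S fun x => ∫ a, F a x ∂μ := by
  refine ⟨hS, fun x hx y hy s t hs ht hst => ?_⟩
  simp only [smul_eq_mul]
  rw [← integral_const_mul, ← integral_const_mul,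
    ← integral_add ((hint x hx).const_mul s) ((hint y hy).const_mul t)]
  refine integral_mono_ae (((hint x hx).const_mul s).add ((hint y hy).const_mul t))
    (hint _ (hS hx hy hs ht hst)) ?_
  filter_upwards [hF] with a ha
  simpa only [smul_eq_mul] using ha.2 hx hy hs ht hst

theorem ConvexOn.integral {F : α → E → ℝ} (hS : Convex ℝ S)
    (hF : ∀ᵐ a ∂μ, ConvexOn ℝ S (F a)) (hint : ∀ x ∈ S, Integrable (F · x) μ) :
    ConvexOn ℝ S fun x => ∫ a, F a x ∂μ := by
  have := ConcaveOn.integral (F := fun a x => -F a x) hS (hF.mono fun a ha => ha.neg)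
    fun x hx => (hint x hx).neg
  rwa [← neg_concaveOn_iff, show (-fun x => ∫ a, F a x ∂μ) = fun x => ∫ a, -F a x ∂μ by
    ext; simp only [Pi.neg_apply, integral_neg]]

end Convexity

section PowerIntegral

/-- Equal to `π / sin (π q)` for `0 < q < 1`. -/
noncomputable def powIntegralConst (q : ℝ) : ℝ := ∫ s in Ioi (0 : ℝ), s ^ (q - 1) * (1 / (1 + s))

theorem integrableOn_rpow_mul_div_add {q x : ℝ} (hq0 : 0 < q) (hq1 : q < 1) (hx : 0 < x) :
    IntegrableOn (fun s : ℝ => s ^ (q - 1) * (x / (x + s))) (Ioi 0) := by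
  have hcont : ContinuousOn (fun s : ℝ => s ^ (q - 1) * (x / (x + s))) (Ioi 0) :=
    (continuousOn_id.rpow_const fun s hs => Or.inl (ne_of_gt hs)).mul
      (continuousOn_const.div (continuousOn_const.add continuousOn_id) fun s hs =>
        (add_pos hx hs).ne')
  rw [← Ioc_union_Ioi_eq_Ioi zero_le_one]
  refine IntegrableOn.union ?_ ?_
  · have hdom : IntegrableOn (fun s : ℝ => s ^ (q - 1)) (Ioc 0 1) :=
      (intervalIntegrable_iff_integrableOn_Ioc_of_le zero_le_one).1
        (intervalIntegral.intervalIntegrable_rpow' (by linarith))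
    refine hdom.mono' ((hcont.mono Ioc_subset_Ioi_self).aestronglyMeasurable measurableSet_Ioc)
      ((ae_restrict_iff' measurableSet_Ioc).2 (.of_forall fun s hs => ?_))
    have hs0 : 0 < s := hs.1
    rw [Real.norm_of_nonneg (by positivity)]
    exact mul_le_of_le_one_right (by positivity) ((div_le_one (by positivity)).2 (by linarith))
  · have hdom : IntegrableOn (fun s : ℝ => x * s ^ (q - 2)) (Ioi 1) :=
      (integrableOn_Ioi_rpow_of_lt (by linarith) one_pos).const_mul x
    refine hdom.mono' ((hcont.mono (Ioi_subset_Ioi zero_le_one)).aestronglyMeasurable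
      measurableSet_Ioi) ((ae_restrict_iff' measurableSet_Ioi).2 (.of_forall fun s hs => ?_))
    have hs0 : (0 : ℝ) < s := lt_trans one_pos hs
    rw [Real.norm_of_nonneg (by positivity), show q - 2 = (q - 1) + (-1) by ring,
      Real.rpow_add hs0, Real.rpow_neg_one]
    calc s ^ (q - 1) * (x / (x + s)) ≤ s ^ (q - 1) * (x / s) := by
          gcongr; linarith
      _ = x * (s ^ (q - 1) * s⁻¹) := by ring

theorem powIntegralConst_pos {q : ℝ} (hq0 : 0 < q) (hq1 : q < 1) : 0 < powIntegralConst q := by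
  have hint := integrableOn_rpow_mul_div_add hq0 hq1 one_pos
  refine setIntegral_pos_iff_support_of_nonneg_ae
    (ae_restrict_of_forall_mem measurableSet_Ioi fun s (hs : 0 < s) => ?_) hint |>.2 ?_
  · dsimp only [Pi.zero_apply]; positivity
  · have : Ioi (0 : ℝ) ⊆ Function.support fun s : ℝ => s ^ (q - 1) * (1 / (1 + s)) :=
      fun s (hs : 0 < s) => (by positivity : 0 < s ^ (q - 1) * (1 / (1 + s))).ne'
    rw [inter_eq_right.2 this, Real.volume_Ioi]
    exact ENNReal.zero_lt_top

theorem integral_rpow_mul_div_add {q x : ℝ} (hx : 0 < x) :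
    ∫ s in Ioi (0 : ℝ), s ^ (q - 1) * (x / (x + s)) = x ^ q * powIntegralConst q := by
  have hsubst := integral_comp_mul_left_Ioi (fun s : ℝ => s ^ (q - 1) * (x / (x + s))) 0 hx
  rw [mul_zero] at hsubst
  have hscale : ∀ u ∈ Ioi (0 : ℝ),
      (x * u) ^ (q - 1) * (x / (x + x * u)) = x ^ (q - 1) * (u ^ (q - 1) * (1 / (1 + u))) := by
    intro u (hu : 0 < u)
    rw [Real.mul_rpow hx.le hu.le, show x + x * u = x * (1 + u) by ring,
      div_mul_cancel_left₀ hx.ne']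
    ring
  rw [setIntegral_congr_fun measurableSet_Ioi hscale, integral_const_mul, smul_eq_mul,
    ← powIntegralConst, eq_inv_mul_iff_mul_eq₀ hx.ne'] at hsubst
  rw [← hsubst, Real.rpow_sub_one hx.ne']
  field_simp

theorem rpow_mul_mul_div_add_eq {a b : ℝ} (hb : b ≠ 0) (q c : ℝ) :
    (fun s : ℝ => s ^ (q - 1) * (a * c / (a + s * b))) =
      fun s => c * (s ^ (q - 1) * (a / b / (a / b + s))) := by
  ext s
  rw [div_add' _ _ _ hb, div_div_div_cancel_right₀ hb, mul_comm a c, mul_div_assoc]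
  ring

theorem integrableOn_rpow_mul_mul_div_add {q a b : ℝ} (hq0 : 0 < q) (hq1 : q < 1) (ha : 0 < a)
    (hb : 0 < b) (c : ℝ) :
    IntegrableOn (fun s : ℝ => s ^ (q - 1) * (a * c / (a + s * b))) (Ioi 0) := by
  rw [rpow_mul_mul_div_add_eq hb.ne']
  exact (integrableOn_rpow_mul_div_add hq0 hq1 (div_pos ha hb)).const_mul c

theorem integral_rpow_mul_mul_div_add {q a b : ℝ} (ha : 0 < a) (hb : 0 < b) (c : ℝ) :
    ∫ s in Ioi (0 : ℝ), s ^ (q - 1) * (a * c / (a + s * b)) =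
      (a / b) ^ q * c * powIntegralConst q := by
  rw [rpow_mul_mul_div_add_eq hb.ne', integral_const_mul,
    integral_rpow_mul_div_add (div_pos ha hb)]
  ring

end PowerIntegral

theorem Complex.complete_square_parallelSum {a b s : ℝ} (ha : 0 < a) (hb : 0 < b) (hs : 0 < s)
    (x z : ℂ) :
    s⁻¹ * (a * ‖x‖ ^ 2) + b * ‖z - x‖ ^ 2 =
      a * b / (a + s * b) * ‖z‖ ^ 2 +
        (a + s * b) / s * ‖x - ((s * b / (a + s * b) : ℝ) : ℂ) * z‖ ^ 2 := by
  have : a + s * b ≠ 0 := by positivity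
  simp only [Complex.sq_norm, Complex.normSq_apply, Complex.sub_re, Complex.sub_im,
    Complex.mul_re, Complex.mul_im, Complex.ofReal_re, Complex.ofReal_im]
  field_simp
  ring

theorem Complex.complete_square_sq_div {a b : ℝ} (hb : 0 < b) (w z : ℂ) :
    2 * (star w * (a : ℂ) * z).re - b * ‖w‖ ^ 2 =
      a * a / b * ‖z‖ ^ 2 - b * ‖w - ((a / b : ℝ) : ℂ) * z‖ ^ 2 := by
  simp only [Complex.sq_norm, Complex.normSq_apply, Complex.sub_re, Complex.sub_im,
    Complex.mul_re, Complex.mul_im, Complex.ofReal_re, Complex.ofReal_im, Complex.star_def,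
    Complex.conj_re, Complex.conj_im]
  field_simp
  ring

namespace Matrix

variable {m n : Type*}

def posDefPairs : Set (Matrix m m ℂ × Matrix n n ℂ) := {A | A.PosDef} ×ˢ {B | B.PosDef}

theorem convex_posDef : Convex ℝ {A : Matrix m m ℂ | A.PosDef} :=
  convex_iff_forall_pos.2 fun _ hA _ hB _ _ ha hb _ => (hA.smul ha).add (hB.smul hb)

theorem convex_posDefPairs : Convex ℝ (posDefPairs : Set (Matrix m m ℂ × Matrix n n ℂ)) :=
  convex_posDef.prod convex_posDef

variable [Fintype m] [DecidableEq m] [Fintype n] [DecidableEq n]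
  {A : Matrix m m ℂ} {B : Matrix n n ℂ}

theorem matFun_id (hA : A.IsHermitian) : matFun id A = A := by
  rw [matFun, dif_pos hA]
  exact hA.spectral_theorem.symm

theorem matFun_one (hA : A.IsHermitian) : matFun 1 A = 1 := by
  simp [matFun, dif_pos hA, Unitary.mul_star_self_of_mem hA.eigenvectorUnitary.2]

noncomputable def eigenCoords (hA : A.IsHermitian) (hB : B.IsHermitian) (X : Matrix m n ℂ) :
    Matrix m n ℂ :=
  star (hA.eigenvectorUnitary : Matrix m m ℂ) * X * (hB.eigenvectorUnitary : Matrix n n ℂ)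

theorem eigenCoords_sub (hA : A.IsHermitian) (hB : B.IsHermitian) (X Y : Matrix m n ℂ) :
    eigenCoords hA hB (X - Y) = eigenCoords hA hB X - eigenCoords hA hB Y := by
  simp only [eigenCoords, Matrix.mul_sub, Matrix.sub_mul]

theorem eigenCoords_surjective (hA : A.IsHermitian) (hB : B.IsHermitian) :
    Function.Surjective (eigenCoords hA hB) := fun N => by
  refine ⟨(hA.eigenvectorUnitary : Matrix m m ℂ) * N * star (hB.eigenvectorUnitary : Matrix n n ℂ),
    ?_⟩
  simp only [eigenCoords, Matrix.mul_assoc, Unitary.star_mul_self_of_mem hB.eigenvectorUnitary.2,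
    Matrix.mul_one]
  simp only [← Matrix.mul_assoc, Unitary.star_mul_self_of_mem hA.eigenvectorUnitary.2,
    Matrix.one_mul]

theorem trace_conjTranspose_mul_matFun_mul_mul_matFun (hA : A.IsHermitian) (hB : B.IsHermitian)
    (f g : ℝ → ℝ) (W K : Matrix m n ℂ) :
    (Wᴴ * matFun f A * K * matFun g B).trace =
      ∑ i, ∑ j, star (eigenCoords hA hB W i j) *
        ((f (hA.eigenvalues i) * g (hB.eigenvalues j) : ℝ) : ℂ) * eigenCoords hA hB K i j := by
  set V := (hB.eigenvectorUnitary : Matrix n n ℂ)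
  have hcycle : (Wᴴ * matFun f A * K * matFun g B).trace =
      ((eigenCoords hA hB W)ᴴ * (diagonal (fun i => (f (hA.eigenvalues i) : ℂ)) *
        eigenCoords hA hB K) * diagonal (fun j => (g (hB.eigenvalues j) : ℂ))).trace := by
    rw [matFun, dif_pos hA, matFun, dif_pos hB, ← Matrix.mul_assoc _ _ (star V),
      trace_mul_comm]
    simp only [eigenCoords, conjTranspose_mul, star_eq_conjTranspose, conjTranspose_conjTranspose,
      Matrix.mul_assoc, V]
  rw [hcycle, trace, Finset.sum_comm]
  refine Finset.sum_congr rfl fun j _ => ?_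
  rw [diag_apply, mul_diagonal, mul_apply, Finset.sum_mul]
  refine Finset.sum_congr rfl fun i _ => ?_
  rw [diagonal_mul, conjTranspose_apply]
  push_cast
  ring

/-- `⟨K, φ(L_A, R_B) K⟩` for the commuting left and right multiplications `L_A`, `R_B`;
junk value `0` unless both matrices are Hermitian. -/
noncomputable def eigenSum (φ : ℝ → ℝ → ℝ) (K : Matrix m n ℂ)
    (x : Matrix m m ℂ × Matrix n n ℂ) : ℝ :=
  if h : x.1.IsHermitian ∧ x.2.IsHermitian then
    ∑ i, ∑ j, φ (h.1.eigenvalues i) (h.2.eigenvalues j) * ‖eigenCoords h.1 h.2 K i j‖ ^ 2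
  else 0

theorem eigenSum_of_isHermitian (φ : ℝ → ℝ → ℝ) (K : Matrix m n ℂ) (hA : A.IsHermitian)
    (hB : B.IsHermitian) :
    eigenSum φ K (A, B) =
      ∑ i, ∑ j, φ (hA.eigenvalues i) (hB.eigenvalues j) * ‖eigenCoords hA hB K i j‖ ^ 2 :=
  dif_pos ⟨hA, hB⟩

theorem re_trace_conjTranspose_mul_matFun_mul_mul_matFun (hA : A.IsHermitian)
    (hB : B.IsHermitian) (f g : ℝ → ℝ) (K : Matrix m n ℂ) :
    (Kᴴ * matFun f A * K * matFun g B).trace.re = eigenSum (fun a b => f a * g b) K (A, B) := by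
  rw [trace_conjTranspose_mul_matFun_mul_mul_matFun hA hB, eigenSum_of_isHermitian _ _ hA hB]
  simp only [Complex.re_sum]
  refine Finset.sum_congr rfl fun i _ => Finset.sum_congr rfl fun j _ => ?_
  rw [mul_right_comm, Complex.re_mul_ofReal, Complex.star_def, Complex.conj_mul',
    ← Complex.ofReal_pow, Complex.ofReal_re, mul_comm]

theorem re_trace_conjTranspose_mul_mul (hA : A.IsHermitian) (hB : B.IsHermitian)
    (X : Matrix m n ℂ) : (Xᴴ * A * X).trace.re = eigenSum (fun a _ => a) X (A, B) := by
  simpa [matFun_id hA, matFun_one hB] using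
    re_trace_conjTranspose_mul_matFun_mul_mul_matFun hA hB id 1 X

theorem re_trace_conjTranspose_mul_self_mul (hA : A.IsHermitian) (hB : B.IsHermitian)
    (X : Matrix m n ℂ) : (Xᴴ * X * B).trace.re = eigenSum (fun _ b => b) X (A, B) := by
  simpa [matFun_id hB, matFun_one hA] using
    re_trace_conjTranspose_mul_matFun_mul_mul_matFun hA hB 1 id X

section eigenSum

variable (K : Matrix m n ℂ) {x : Matrix m m ℂ × Matrix n n ℂ}

theorem eigenSum_congr {φ ψ : ℝ → ℝ → ℝ} (hx : x ∈ posDefPairs)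
    (h : ∀ a b, 0 < a → 0 < b → φ a b = ψ a b) : eigenSum φ K x = eigenSum ψ K x := by
  obtain ⟨A, B⟩ := x
  obtain ⟨hA, hB⟩ := hx
  rw [eigenSum_of_isHermitian _ _ hA.1 hB.1, eigenSum_of_isHermitian _ _ hA.1 hB.1]
  refine Finset.sum_congr rfl fun i _ => Finset.sum_congr rfl fun j _ => ?_
  rw [h _ _ (hA.eigenvalues_pos i) (hB.eigenvalues_pos j)]

theorem eigenSum_const_mul (c : ℝ) (φ : ℝ → ℝ → ℝ) :
    eigenSum (fun a b => c * φ a b) K x = c * eigenSum φ K x := by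
  unfold eigenSum
  split_ifs
  · simp only [Finset.mul_sum, mul_assoc]
  · rw [mul_zero]

theorem eigenSum_sub (φ ψ : ℝ → ℝ → ℝ) :
    eigenSum (fun a b => φ a b - ψ a b) K x = eigenSum φ K x - eigenSum ψ K x := by
  unfold eigenSum
  split_ifs
  · simp only [sub_mul, Finset.sum_sub_distrib]
  · rw [sub_zero]

variable {α : Type*} [MeasurableSpace α] {μ : Measure α} {φ : α → ℝ → ℝ → ℝ}

theorem integrable_eigenSum (hx : x ∈ posDefPairs)
    (hφ : ∀ a b, 0 < a → 0 < b → Integrable (fun s => φ s a b) μ) :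
    Integrable (fun s => eigenSum (φ s) K x) μ := by
  obtain ⟨A, B⟩ := x
  obtain ⟨hA, hB⟩ := hx
  simp only [eigenSum_of_isHermitian _ _ hA.1 hB.1]
  exact integrable_finsetSum _ fun i _ => integrable_finsetSum _ fun j _ =>
    (hφ _ _ (hA.eigenvalues_pos i) (hB.eigenvalues_pos j)).mul_const _

theorem integral_eigenSum (hx : x ∈ posDefPairs)
    (hφ : ∀ a b, 0 < a → 0 < b → Integrable (fun s => φ s a b) μ) :
    ∫ s, eigenSum (φ s) K x ∂μ = eigenSum (fun a b => ∫ s, φ s a b ∂μ) K x := by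
  obtain ⟨A, B⟩ := x
  obtain ⟨hA, hB⟩ := hx
  simp only [eigenSum_of_isHermitian _ _ hA.1 hB.1]
  rw [integral_finsetSum _ fun i _ => integrable_finsetSum _ fun j _ =>
    (hφ _ _ (hA.eigenvalues_pos i) (hB.eigenvalues_pos j)).mul_const _]
  refine Finset.sum_congr rfl fun i _ => ?_
  rw [integral_finsetSum _ fun j _ =>
    (hφ _ _ (hA.eigenvalues_pos i) (hB.eigenvalues_pos j)).mul_const _]
  simp only [integral_mul_const]

end eigenSum

def reTraceMulₗ {k : Type*} [Fintype k] (P : Matrix k m ℂ) (Q : Matrix m k ℂ) :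
    Matrix m m ℂ →ₗ[ℝ] ℝ where
  toFun A := (P * A * Q).trace.re
  map_add' A A' := by simp [Matrix.mul_add, Matrix.add_mul]
  map_smul' c A := by simp

/-- Its infimum over `X` is `⟨K, (s L_A⁻¹ + R_B⁻¹)⁻¹ K⟩`, the parallel sum of `L_A / s` and `R_B`
evaluated at `K`. -/
noncomputable def parallelSumTrial (s : ℝ) (K X : Matrix m n ℂ) :
    Matrix m m ℂ × Matrix n n ℂ →ₗ[ℝ] ℝ :=
  s⁻¹ • reTraceMulₗ Xᴴ X ∘ₗ LinearMap.fst ℝ _ _ +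
    reTraceMulₗ ((K - X)ᴴ * (K - X)) 1 ∘ₗ LinearMap.snd ℝ _ _

theorem parallelSumTrial_eq_eigenSum_add {s : ℝ} (hs : 0 < s) (K X : Matrix m n ℂ)
    (hA : A.PosDef) (hB : B.PosDef) :
    parallelSumTrial s K X (A, B) = eigenSum (fun a b => a * b / (a + s * b)) K (A, B) +
      ∑ i, ∑ j, (hA.1.eigenvalues i + s * hB.1.eigenvalues j) / s *
        ‖eigenCoords hA.1 hB.1 X i j -
          ((s * hB.1.eigenvalues j / (hA.1.eigenvalues i + s * hB.1.eigenvalues j) : ℝ) : ℂ) *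
            eigenCoords hA.1 hB.1 K i j‖ ^ 2 := by
  simp only [parallelSumTrial, reTraceMulₗ, LinearMap.add_apply, LinearMap.smul_apply,
    LinearMap.comp_apply, LinearMap.coe_mk, AddHom.coe_mk, LinearMap.fst_apply,
    LinearMap.snd_apply, Matrix.mul_one, smul_eq_mul]
  rw [re_trace_conjTranspose_mul_mul hA.1 hB.1, re_trace_conjTranspose_mul_self_mul hA.1 hB.1,
    eigenSum_of_isHermitian _ _ hA.1 hB.1, eigenSum_of_isHermitian _ _ hA.1 hB.1,
    eigenSum_of_isHermitian _ _ hA.1 hB.1, eigenCoords_sub, Finset.mul_sum,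
    ← Finset.sum_add_distrib, ← Finset.sum_add_distrib]
  refine Finset.sum_congr rfl fun i _ => ?_
  rw [Finset.mul_sum, ← Finset.sum_add_distrib, ← Finset.sum_add_distrib]
  exact Finset.sum_congr rfl fun j _ => Complex.complete_square_parallelSum
    (hA.eigenvalues_pos i) (hB.eigenvalues_pos j) hs _ _

theorem isLeast_parallelSumTrial {s : ℝ} (hs : 0 < s) (K : Matrix m n ℂ)
    {x : Matrix m m ℂ × Matrix n n ℂ} (hx : x ∈ posDefPairs) :
    IsLeast (range fun X => parallelSumTrial s K X x)
      (eigenSum (fun a b => a * b / (a + s * b)) K x) := by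
  obtain ⟨A, B⟩ := x
  obtain ⟨hA, hB⟩ : A.PosDef ∧ B.PosDef := hx
  refine ⟨?_, ?_⟩
  · obtain ⟨X, hX⟩ := eigenCoords_surjective hA.1 hB.1 (Matrix.of fun i j =>
      ((s * hB.1.eigenvalues j / (hA.1.eigenvalues i + s * hB.1.eigenvalues j) : ℝ) : ℂ) *
        eigenCoords hA.1 hB.1 K i j)
    refine ⟨X, ?_⟩
    simp [parallelSumTrial_eq_eigenSum_add hs K X hA hB, hX]
  · rintro _ ⟨X, rfl⟩
    dsimp only
    rw [parallelSumTrial_eq_eigenSum_add hs K X hA hB]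
    refine le_add_of_nonneg_right (Finset.sum_nonneg fun i _ => Finset.sum_nonneg fun j _ => ?_)
    have := hA.eigenvalues_pos i
    have := hB.eigenvalues_pos j
    positivity

/-- Its supremum over `W` is `⟨K, L_A² R_B⁻¹ K⟩`. -/
noncomputable def sqDivTrial (K W : Matrix m n ℂ) : Matrix m m ℂ × Matrix n n ℂ →ₗ[ℝ] ℝ :=
  (2 : ℝ) • reTraceMulₗ Wᴴ K ∘ₗ LinearMap.fst ℝ _ _ -
    reTraceMulₗ (Wᴴ * W) 1 ∘ₗ LinearMap.snd ℝ _ _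

theorem sqDivTrial_eq_eigenSum_sub (K W : Matrix m n ℂ) (hA : A.PosDef) (hB : B.PosDef) :
    sqDivTrial K W (A, B) = eigenSum (fun a b => a * a / b) K (A, B) -
      ∑ i, ∑ j, hB.1.eigenvalues j * ‖eigenCoords hA.1 hB.1 W i j -
        ((hA.1.eigenvalues i / hB.1.eigenvalues j : ℝ) : ℂ) * eigenCoords hA.1 hB.1 K i j‖ ^ 2 := by
  simp only [sqDivTrial, reTraceMulₗ, LinearMap.sub_apply, LinearMap.smul_apply,
    LinearMap.comp_apply, LinearMap.coe_mk, AddHom.coe_mk, LinearMap.fst_apply,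
    LinearMap.snd_apply, Matrix.mul_one, smul_eq_mul]
  have hcross := trace_conjTranspose_mul_matFun_mul_mul_matFun hA.1 hB.1 id 1 W K
  rw [matFun_id hA.1, matFun_one hB.1, Matrix.mul_one] at hcross
  rw [hcross, re_trace_conjTranspose_mul_self_mul hA.1 hB.1,
    eigenSum_of_isHermitian _ _ hA.1 hB.1, eigenSum_of_isHermitian _ _ hA.1 hB.1]
  simp only [Complex.re_sum, Finset.mul_sum, ← Finset.sum_sub_distrib]
  refine Finset.sum_congr rfl fun i _ => Finset.sum_congr rfl fun j _ => ?_
  simpa using Complex.complete_square_sq_div (hB.eigenvalues_pos j) _ _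

theorem isGreatest_sqDivTrial (K : Matrix m n ℂ) {x : Matrix m m ℂ × Matrix n n ℂ}
    (hx : x ∈ posDefPairs) :
    IsGreatest (range fun W => sqDivTrial K W x) (eigenSum (fun a b => a * a / b) K x) := by
  obtain ⟨A, B⟩ := x
  obtain ⟨hA, hB⟩ : A.PosDef ∧ B.PosDef := hx
  refine ⟨?_, ?_⟩
  · obtain ⟨W, hW⟩ := eigenCoords_surjective hA.1 hB.1 (Matrix.of fun i j =>
      ((hA.1.eigenvalues i / hB.1.eigenvalues j : ℝ) : ℂ) * eigenCoords hA.1 hB.1 K i j)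
    refine ⟨W, ?_⟩
    simp [sqDivTrial_eq_eigenSum_sub K W hA hB, hW]
  · rintro _ ⟨W, rfl⟩
    dsimp only
    rw [sqDivTrial_eq_eigenSum_sub K W hA hB]
    refine sub_le_self _ (Finset.sum_nonneg fun i _ => Finset.sum_nonneg fun j _ => ?_)
    have := hB.eigenvalues_pos j
    positivity

section Concavity

variable (K : Matrix m n ℂ)

theorem concaveOn_eigenSum_mul_div_add {s : ℝ} (hs : 0 < s) :
    ConcaveOn ℝ posDefPairs (eigenSum (fun a b => a * b / (a + s * b)) K) :=
  .of_isLeast convex_posDefPairs (fun X => (parallelSumTrial s K X).concaveOn convex_posDefPairs)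
    fun _ hx => isLeast_parallelSumTrial hs K hx

theorem convexOn_eigenSum_mul_self_div_add {s : ℝ} (hs : 0 < s) :
    ConvexOn ℝ posDefPairs (eigenSum (fun a b => a * a / (a + s * b)) K) := by
  refine (((reTraceMulₗ Kᴴ K ∘ₗ LinearMap.fst ℝ _ _).convexOn convex_posDefPairs).sub
    ((concaveOn_eigenSum_mul_div_add K hs).smul hs.le)).congr fun x hx => ?_
  obtain ⟨A, B⟩ := x
  have hsplit := eigenSum_congr K hx (φ := fun a b => a * a / (a + s * b))
    (ψ := fun a b => a - s * (a * b / (a + s * b))) fun a b ha hb => by field_simp; ring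
  rw [hsplit, eigenSum_sub, eigenSum_const_mul, ← re_trace_conjTranspose_mul_mul hx.1.1 hx.2.1]
  rfl

theorem convexOn_eigenSum_mul_self_div :
    ConvexOn ℝ posDefPairs (eigenSum (fun a b => a * a / b) K) :=
  .of_isGreatest convex_posDefPairs (fun W => (sqDivTrial K W).convexOn convex_posDefPairs)
    fun _ hx => isGreatest_sqDivTrial K hx

theorem eigenSum_eq_integral {q : ℝ} (hq0 : 0 < q) (hq1 : q < 1) (γ : ℝ → ℝ → ℝ)
    {x : Matrix m m ℂ × Matrix n n ℂ} (hx : x ∈ posDefPairs) :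
    eigenSum (fun a b => (a / b) ^ q * γ a b) K x = (powIntegralConst q)⁻¹ *
      ∫ s in Ioi (0 : ℝ), eigenSum (fun a b => s ^ (q - 1) * (a * γ a b / (a + s * b))) K x := by
  rw [integral_eigenSum K hx fun a b ha hb => integrableOn_rpow_mul_mul_div_add hq0 hq1 ha hb _,
    ← eigenSum_const_mul]
  refine eigenSum_congr K hx fun a b ha hb => ?_
  rw [integral_rpow_mul_mul_div_add ha hb]
  have := (powIntegralConst_pos hq0 hq1).ne'
  field_simp

theorem concaveOn_eigenSum_rpow {p : ℝ} (hp0 : 0 < p) (hp1 : p < 1) :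
    ConcaveOn ℝ posDefPairs (eigenSum (fun a b => a ^ p * b ^ (1 - p)) K) := by
  have hconc : ConcaveOn ℝ posDefPairs fun x =>
      ∫ s in Ioi (0 : ℝ), eigenSum (fun a b => s ^ (p - 1) * (a * b / (a + s * b))) K x := by
    refine .integral convex_posDefPairs (ae_restrict_of_forall_mem measurableSet_Ioi
      fun s (hs : 0 < s) => ?_) fun x hx => integrable_eigenSum K hx fun a b ha hb =>
        integrableOn_rpow_mul_mul_div_add hp0 hp1 ha hb b
    simpa only [← eigenSum_const_mul, smul_eq_mul] using
      (concaveOn_eigenSum_mul_div_add K hs).smul (Real.rpow_nonneg hs.le (p - 1))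
  refine (hconc.smul (inv_nonneg.2 (powIntegralConst_pos hp0 hp1).le)).congr fun x hx => ?_
  dsimp only
  rw [smul_eq_mul, ← eigenSum_eq_integral K hp0 hp1 (fun _ b => b) hx]
  refine eigenSum_congr K hx fun a b ha hb => ?_
  rw [Real.div_rpow ha.le hb.le, Real.rpow_sub hb, Real.rpow_one]
  field_simp

theorem convexOn_eigenSum_rpow {p : ℝ} (hp1 : 1 < p) (hp2 : p ≤ 2) :
    ConvexOn ℝ posDefPairs (eigenSum (fun a b => a ^ p * b ^ (1 - p)) K) := by
  rcases hp2.eq_or_lt with rfl | hp2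
  · refine (convexOn_eigenSum_mul_self_div K).congr fun x hx => eigenSum_congr K hx
      fun a b _ hb => ?_
    rw [show (1 : ℝ) - 2 = -1 by norm_num, Real.rpow_neg_one, Real.rpow_two]
    ring
  have hq0 : 0 < p - 1 := by linarith
  have hq1 : p - 1 < 1 := by linarith
  have hconv : ConvexOn ℝ posDefPairs fun x => ∫ s in Ioi (0 : ℝ),
      eigenSum (fun a b => s ^ (p - 1 - 1) * (a * a / (a + s * b))) K x := by
    refine .integral convex_posDefPairs (ae_restrict_of_forall_mem measurableSet_Ioi
      fun s (hs : 0 < s) => ?_) fun x hx => integrable_eigenSum K hx fun a b ha hb =>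
        integrableOn_rpow_mul_mul_div_add hq0 hq1 ha hb a
    simpa only [← eigenSum_const_mul, smul_eq_mul] using
      (convexOn_eigenSum_mul_self_div_add K hs).smul (Real.rpow_nonneg hs.le (p - 1 - 1))
  refine (hconv.smul (inv_nonneg.2 (powIntegralConst_pos hq0 hq1).le)).congr fun x hx => ?_
  dsimp only
  rw [smul_eq_mul, ← eigenSum_eq_integral K hq0 hq1 (fun a _ => a) hx]
  refine eigenSum_congr K hx fun a b ha hb => ?_
  rw [Real.div_rpow ha.le hb.le, Real.rpow_sub_one ha.ne', Real.rpow_sub_one hb.ne',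
    Real.rpow_sub hb, Real.rpow_one]
  field_simp

end Concavity

noncomputable def liebTrace (p : ℝ) (K : Matrix m n ℂ) (x : Matrix m m ℂ × Matrix n n ℂ) : ℝ :=
  (Kᴴ * matFun (fun x => x ^ p) x.1 * K * matFun (fun x => x ^ (1 - p)) x.2).trace.re

theorem liebTrace_eq_eigenSum (p : ℝ) (K : Matrix m n ℂ) {x : Matrix m m ℂ × Matrix n n ℂ}
    (hx : x ∈ posDefPairs) : liebTrace p K x = eigenSum (fun a b => a ^ p * b ^ (1 - p)) K x :=
  re_trace_conjTranspose_mul_matFun_mul_mul_matFun hx.1.1 hx.2.1 _ _ K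

theorem liebTrace_swap (p : ℝ) (K : Matrix m n ℂ) (x : Matrix m m ℂ × Matrix n n ℂ) :
    liebTrace p K x = liebTrace (1 - p) Kᴴ x.swap := by
  rw [liebTrace, liebTrace, sub_sub_cancel, conjTranspose_conjTranspose, Prod.fst_swap,
    Prod.snd_swap, Matrix.mul_assoc (Kᴴ * _), trace_mul_comm]
  simp only [Matrix.mul_assoc]

theorem concaveOn_liebTrace {p : ℝ} (hp0 : 0 < p) (hp1 : p < 1) (K : Matrix m n ℂ) :
    ConcaveOn ℝ posDefPairs (liebTrace p K) :=
  (concaveOn_eigenSum_rpow K hp0 hp1).congr fun _ hx => (liebTrace_eq_eigenSum p K hx).symm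

theorem convexOn_liebTrace {p : ℝ} (hp1 : 1 < p) (hp2 : p ≤ 2) (K : Matrix m n ℂ) :
    ConvexOn ℝ posDefPairs (liebTrace p K) :=
  (convexOn_eigenSum_rpow K hp1 hp2).congr fun _ hx => (liebTrace_eq_eigenSum p K hx).symm

theorem convexOn_liebTrace_of_neg {p : ℝ} (hp1 : -1 ≤ p) (hp0 : p < 0) (K : Matrix m n ℂ) :
    ConvexOn ℝ posDefPairs (liebTrace p K) := by
  have hswap := (convexOn_liebTrace (p := 1 - p) (by linarith) (by linarith) Kᴴ).comp_linearMap
    (LinearEquiv.prodComm ℝ (Matrix m m ℂ) (Matrix n n ℂ)).toLinearMap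
  rw [show ⇑(LinearEquiv.prodComm ℝ (Matrix m m ℂ) (Matrix n n ℂ)).toLinearMap ⁻¹' posDefPairs =
    posDefPairs from preimage_swap_prod _ _] at hswap
  exact hswap.congr fun x _ => (liebTrace_swap p K x).symm

theorem concaveOn_one_div_mul_liebTrace {p : ℝ}
    (hp : (-1 ≤ p ∧ p < 0) ∨ (0 < p ∧ p < 1) ∨ (1 < p ∧ p ≤ 2)) (K : Matrix m n ℂ) :
    ConcaveOn ℝ posDefPairs fun x => 1 / (p * (1 - p)) * liebTrace p K x := by
  rcases hp with ⟨hp1, hp0⟩ | ⟨hp0, hp1⟩ | ⟨hp1, hp2⟩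
  · exact (convexOn_liebTrace_of_neg hp1 hp0 K).concaveOn_const_mul
      (one_div_nonpos.2 (mul_nonpos_of_nonpos_of_nonneg hp0.le (by linarith)))
  · exact (concaveOn_liebTrace hp0 hp1 K).smul
      (one_div_nonneg.2 (mul_nonneg hp0.le (by linarith)))
  · exact (convexOn_liebTrace hp1 hp2 K).concaveOn_const_mul
      (one_div_nonpos.2 (mul_nonpos_of_nonneg_of_nonpos (by linarith) (by linarith)))

end Matrix

/-- For `p ∈ [−1,0) ∪ (0,1) ∪ (1,2]` and a fixed matrix `K`, the map
`(A, B) ↦ (1/(p(1−p))) Tr(K* A^p K B^(1−p))` is jointly concave on pairs of positive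
definite matrices (in particular, for `p ∈ (1,2]` the map
`(A, B) ↦ Tr(K* A^p K B^(1−p))` is jointly convex).
(The traced expression is real; we take its real part.) -/
theorem lieb_ando_concavity
    (p : ℝ) (hp : (-1 ≤ p ∧ p < 0) ∨ (0 < p ∧ p < 1) ∨ (1 < p ∧ p ≤ 2))
    {m n : ℕ} (K : Matrix (Fin m) (Fin n) ℂ)
    (A₁ A₂ : Matrix (Fin m) (Fin m) ℂ) (B₁ B₂ : Matrix (Fin n) (Fin n) ℂ)
    (hA₁ : A₁.PosDef) (hA₂ : A₂.PosDef) (hB₁ : B₁.PosDef) (hB₂ : B₂.PosDef)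
    (t : ℝ) (ht0 : 0 ≤ t) (ht1 : t ≤ 1) :
    1 / (p * (1 - p)) *
        (Kᴴ * matFun (fun x => x ^ p) (t • A₁ + (1 - t) • A₂) * K *
          matFun (fun x => x ^ (1 - p)) (t • B₁ + (1 - t) • B₂)).trace.re
      ≥ t * (1 / (p * (1 - p)) *
              (Kᴴ * matFun (fun x => x ^ p) A₁ * K * matFun (fun x => x ^ (1 - p)) B₁).trace.re)
        + (1 - t) * (1 / (p * (1 - p)) *
              (Kᴴ * matFun (fun x => x ^ p) A₂ * K *
                matFun (fun x => x ^ (1 - p)) B₂).trace.re) :=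
  (concaveOn_one_div_mul_liebTrace hp K).2 (x := (A₁, B₁)) (y := (A₂, B₂)) ⟨hA₁, hB₁⟩ ⟨hA₂, hB₂⟩
    ht0 (sub_nonneg.2 ht1) (add_sub_cancel t 1)
end
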